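/- arXiv:2301.03662 — 4 statements merged into one kernel-verified Lean document; each statement's English description precedes it below -/
import Mathlib

section
/- Let Θ ⊆ ℝᵈ be a bounded set with diameter diam(Θ), let D > 0, and let σ, σ′ be Borel probability measures on Θ × [0, D] such that ∫ α dσ(θ, α) = 1 = ∫ α dσ′(θ, α). Define F(σ) to be the finite measure on Θ determined by ∫ φ(θ) d(Fσ)(θ) = ∫ α φ(θ) dσ(θ, α) for all bounded continuous test functions φ (so Fσ and Fσ′ are probability measures). Then for every p ≥ 1, W_p(Fσ, Fσ′)^p ≤ diam(Θ)^{p−1} · (diam(Θ) + D) · W_p(σ, σ′), where W_p denotes the p-Wasserstein distance with respect to the Euclidean metric. -/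
open MeasureTheory

/-- The optimal transport cost between two measures for a given cost function `c`,
defined as the infimum over couplings. -/
noncomputable def transportCost {X : Type*} [MeasurableSpace X]
    (c : X → X → ℝ) (μ ν : Measure X) : ℝ :=
  sInf ((fun Υ : Measure (X × X) => ∫ q, c q.1 q.2 ∂Υ) ''
    {Υ | Υ.map Prod.fst = μ ∧ Υ.map Prod.snd = ν})

/-- The p-Wasserstein distance on `ℝᵈ` (Euclidean metric). -/
noncomputable def WpE {d : ℕ} (p : ℝ) (μ ν : Measure (EuclideanSpace ℝ (Fin d))) : ℝ :=
  (transportCost (fun a b => dist a b ^ p) μ ν) ^ (1 / p)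

/-- The p-Wasserstein distance on the lifted space `ℝᵈ × ℝ`, with respect to the
Euclidean metric on the product. -/
noncomputable def WpLift {d : ℕ} (p : ℝ) (μ ν : Measure (EuclideanSpace ℝ (Fin d) × ℝ)) : ℝ :=
  (transportCost
    (fun a b => Real.sqrt (dist a.1 b.1 ^ 2 + dist a.2 b.2 ^ 2) ^ p) μ ν) ^ (1 / p)

/-- The projection map `F` sending a probability measure `σ` on `Θ × [0,∞)` to the
measure on `Θ` determined by `∫ φ d(Fσ) = ∫ α φ(θ) dσ(θ,α)`. -/
noncomputable def Fproj {d : ℕ} (σ : Measure (EuclideanSpace ℝ (Fin d) × ℝ)) :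
    Measure (EuclideanSpace ℝ (Fin d)) :=
  (σ.withDensity (fun p => ENNReal.ofReal p.2)).map Prod.fst


open scoped ENNReal

section Aux

variable {α β : Type*} [MeasurableSpace α] [MeasurableSpace β]

lemma aux_withDensity_map (μ : Measure α) {f : α → β} (hf : Measurable f)
    {g : β → ℝ≥0∞} (hg : Measurable g) :
    (μ.map f).withDensity g = (μ.withDensity (g ∘ f)).map f := by
  ext s hs
  rw [withDensity_apply _ hs, Measure.map_apply hf hs,
    withDensity_apply _ (hf hs), setLIntegral_map hs hg hf]
  rfl

lemma aux_map_fst_prod (μ : Measure α) (ν : Measure β) [SFinite μ] [SFinite ν] :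
    (μ.prod ν).map Prod.fst = ν Set.univ • μ := by
  ext s hs
  rw [Measure.map_apply measurable_fst hs, ← Set.prod_univ, Measure.prod_prod,
    Measure.smul_apply, smul_eq_mul, mul_comm]

lemma aux_map_snd_prod (μ : Measure α) (ν : Measure β) [SFinite μ] [SFinite ν] :
    (μ.prod ν).map Prod.snd = μ Set.univ • ν := by
  ext s hs
  rw [Measure.map_apply measurable_snd hs, ← Set.univ_prod, Measure.prod_prod,
    Measure.smul_apply, smul_eq_mul]

lemma aux_ae_comp_of_map_null {μ : Measure α} {f : α → β} (hf : Measurable f)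
    {s : Set β} (h : μ.map f sᶜ = 0) : ∀ᵐ x ∂μ, f x ∈ s := by
  obtain ⟨N, hsub, hNm, hN0⟩ := exists_measurable_superset_of_null h
  have h2 : μ (f ⁻¹' N) = 0 := by rw [← Measure.map_apply hf hNm]; exact hN0
  have h3 : ∀ᵐ x ∂μ, f x ∉ N := by rw [ae_iff]; simp only [not_not]; exact h2
  filter_upwards [h3] with x hx
  by_contra hc
  exact hx (hsub hc)

lemma aux_jensenE (μ : Measure α) [IsProbabilityMeasure μ] {g : α → ℝ≥0∞}
    (hg : AEMeasurable g μ) {p : ℝ} (hp : 1 ≤ p) :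
    ∫⁻ x, g x ∂μ ≤ (∫⁻ x, g x ^ p ∂μ) ^ (1 / p) := by
  rcases eq_or_lt_of_le hp with h1 | h1
  · subst h1; simp
  · have hpq : p.HolderConjugate (Real.conjExponent p) :=
      Real.HolderConjugate.conjExponent h1
    have := ENNReal.lintegral_mul_le_Lp_mul_Lq μ hpq hg
      (aemeasurable_const (b := (1:ℝ≥0∞)))
    simpa using this

lemma aux_rpow_le (A : ℝ) {x p : ℝ} (hx : 0 ≤ x) (hxA : x ≤ A) (hp : 1 ≤ p) :
    x ^ p ≤ A ^ (p - 1) * x := by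
  have h : x ^ (p - 1 + 1) = x ^ (p - 1) * x ^ (1 : ℝ) :=
    Real.rpow_add' hx (by linarith)
  have hpe : p - 1 + 1 = p := by ring
  rw [hpe, Real.rpow_one] at h
  rw [h]
  exact mul_le_mul_of_nonneg_right (Real.rpow_le_rpow hx hxA (by linarith)) hx

end Aux

section Key

variable {d : ℕ}

local notation "E" => EuclideanSpace ℝ (Fin d)

lemma key_coupling (Θ : Set E) (hΘ : Bornology.IsBounded Θ)
    (D : ℝ) (hD : 0 < D)
    (σ σ' : Measure (E × ℝ))
    [IsProbabilityMeasure σ] [IsProbabilityMeasure σ']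
    (hσ : σ (Θ ×ˢ Set.Icc (0:ℝ) D)ᶜ = 0) (hσ' : σ' (Θ ×ˢ Set.Icc (0:ℝ) D)ᶜ = 0)
    (hσ1 : ∫ p, p.2 ∂σ = 1) (hσ'1 : ∫ p, p.2 ∂σ' = 1)
    (p : ℝ) (hp : 1 ≤ p)
    (Υ : Measure ((E × ℝ) × (E × ℝ)))
    (hfst : Υ.map Prod.fst = σ) (hsnd : Υ.map Prod.snd = σ') :
    transportCost (fun a b => dist a b ^ p) (Fproj σ) (Fproj σ') ≤
      (Metric.diam Θ ^ (p - 1) * (Metric.diam Θ + D)) *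
        (∫ q, Real.sqrt (dist q.1.1 q.2.1 ^ 2 + dist q.1.2 q.2.2 ^ 2) ^ p ∂Υ) ^ (1 / p) := by
  set A := Metric.diam Θ with hAdef
  have hA0 : 0 ≤ A := Metric.diam_nonneg
  have hp0 : (0:ℝ) < p := lt_of_lt_of_le one_pos hp
  have hp0' : (0:ℝ) ≤ p := hp0.le
  have h1p : (0:ℝ) ≤ 1 / p := by positivity
  -- measurability
  have hmα1 : Measurable fun q : (E × ℝ) × (E × ℝ) => q.1.2 := measurable_fst.snd
  have hmα2 : Measurable fun q : (E × ℝ) × (E × ℝ) => q.2.2 := measurable_snd.snd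
  have hmm : Measurable fun q : (E × ℝ) × (E × ℝ) => min q.1.2 q.2.2 := hmα1.min hmα2
  have hπ : Measurable fun q : (E × ℝ) × (E × ℝ) => (q.1.1, q.2.1) :=
    measurable_fst.fst.prodMk measurable_snd.fst
  have hπ1 : Measurable fun q : (E × ℝ) × (E × ℝ) => q.1.1 := measurable_fst.fst
  have hπ2 : Measurable fun q : (E × ℝ) × (E × ℝ) => q.2.1 := measurable_snd.fst
  have hdE : Measurable fun q : (E × ℝ) × (E × ℝ) => dist q.1.1 q.2.1 :=
    (continuous_fst.fst.dist continuous_snd.fst).measurable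
  have hdR : Measurable fun q : (E × ℝ) × (E × ℝ) => |q.1.2 - q.2.2| := (hmα1.sub hmα2).abs
  have hcE : Measurable fun y : E × E => dist y.1 y.2 ^ p :=
    (continuous_dist.rpow_const fun _ => Or.inr hp0').measurable
  have hcL : Measurable fun q : (E × ℝ) × (E × ℝ) =>
      Real.sqrt (dist q.1.1 q.2.1 ^ 2 + dist q.1.2 q.2.2 ^ 2) ^ p := by
    refine (Continuous.rpow_const ?_ fun _ => Or.inr hp0').measurable
    exact Real.continuous_sqrt.comp
      (((continuous_fst.fst.dist continuous_snd.fst).pow 2).add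
        ((continuous_fst.snd.dist continuous_snd.snd).pow 2))
  -- densities
  set wm : (E × ℝ) × (E × ℝ) → ℝ≥0∞ := fun q => ENNReal.ofReal (min q.1.2 q.2.2) with hwm_def
  set wa : (E × ℝ) × (E × ℝ) → ℝ≥0∞ := fun q => ENNReal.ofReal (q.1.2 - min q.1.2 q.2.2)
    with hwa_def
  set wb : (E × ℝ) × (E × ℝ) → ℝ≥0∞ := fun q => ENNReal.ofReal (q.2.2 - min q.1.2 q.2.2)
    with hwb_def
  have hwm : Measurable wm := hmm.ennreal_ofReal
  have hwa : Measurable wa := (hmα1.sub hmm).ennreal_ofReal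
  have hwb : Measurable wb := (hmα2.sub hmm).ennreal_ofReal
  -- Υ is a probability measure
  haveI hΥprob : IsProbabilityMeasure Υ := by
    constructor
    have h := congrArg (fun m : Measure (E × ℝ) => m Set.univ) hfst
    simpa [Measure.map_apply measurable_fst MeasurableSet.univ] using h
  -- a.e. support
  have hae1 : ∀ᵐ q ∂Υ, q.1 ∈ Θ ×ˢ Set.Icc (0:ℝ) D :=
    aux_ae_comp_of_map_null measurable_fst (by rw [hfst]; exact hσ)
  have hae2 : ∀ᵐ q ∂Υ, q.2 ∈ Θ ×ˢ Set.Icc (0:ℝ) D :=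
    aux_ae_comp_of_map_null measurable_snd (by rw [hsnd]; exact hσ')
  have haeS : ∀ᵐ q ∂Υ, (q.1.1 ∈ Θ ∧ 0 ≤ q.1.2 ∧ q.1.2 ≤ D) ∧
      (q.2.1 ∈ Θ ∧ 0 ≤ q.2.2 ∧ q.2.2 ≤ D) := by
    filter_upwards [hae1, hae2] with q h1 h2
    exact ⟨⟨h1.1, h1.2.1, h1.2.2⟩, ⟨h2.1, h2.2.1, h2.2.2⟩⟩
  -- the pieces
  set ν : Measure ((E × ℝ) × (E × ℝ)) := Υ.withDensity wm with hν
  set κ : Measure (E × E) := ν.map (fun q => (q.1.1, q.2.1)) with hκ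
  set ρ : Measure E := (Υ.withDensity wa).map (fun q => q.1.1) with hρ
  set ρ' : Measure E := (Υ.withDensity wb).map (fun q => q.2.1) with hρ'
  set τ : ℝ≥0∞ := ∫⁻ q, wa q ∂Υ with hτ
  -- integrability of coordinates
  have hbdd : ∀ f : (E × ℝ) × (E × ℝ) → ℝ, Measurable f → (∀ᵐ q ∂Υ, |f q| ≤ D) →
      Integrable f Υ := fun f hf hb =>
    (integrable_const D).mono' hf.aestronglyMeasurable
      (by simpa [Real.norm_eq_abs] using hb)
  have him : Integrable (fun q : (E × ℝ) × (E × ℝ) => min q.1.2 q.2.2) Υ := by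
    refine hbdd _ hmm ?_
    filter_upwards [haeS] with q hq
    rw [abs_le]
    constructor
    · have := le_min hq.1.2.1 hq.2.2.1; linarith
    · have := min_le_left q.1.2 q.2.2; linarith [hq.1.2.2]
  have hiα1 : Integrable (fun q : (E × ℝ) × (E × ℝ) => q.1.2) Υ := by
    refine hbdd _ hmα1 ?_
    filter_upwards [haeS] with q hq
    rw [abs_le]; exact ⟨by linarith [hq.1.2.1], hq.1.2.2⟩
  have hiα2 : Integrable (fun q : (E × ℝ) × (E × ℝ) => q.2.2) Υ := by
    refine hbdd _ hmα2 ?_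
    filter_upwards [haeS] with q hq
    rw [abs_le]; exact ⟨by linarith [hq.2.2.1], hq.2.2.2⟩
  have hint1 : Integrable (fun q : (E × ℝ) × (E × ℝ) => q.1.2 - min q.1.2 q.2.2) Υ :=
    hiα1.sub him
  have hint2 : Integrable (fun q : (E × ℝ) × (E × ℝ) => q.2.2 - min q.1.2 q.2.2) Υ :=
    hiα2.sub him
  have hα1int : ∫ q, q.1.2 ∂Υ = 1 := by
    rw [← hσ1, ← hfst,
      integral_map measurable_fst.aemeasurable measurable_snd.aestronglyMeasurable]
  have hα2int : ∫ q, q.2.2 ∂Υ = 1 := by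
    rw [← hσ'1, ← hsnd,
      integral_map measurable_snd.aemeasurable measurable_snd.aestronglyMeasurable]
  -- τ facts
  have hτa : τ = ENNReal.ofReal (∫ q, (q.1.2 - min q.1.2 q.2.2) ∂Υ) := by
    rw [hτ]
    exact (ofReal_integral_eq_lintegral_ofReal hint1
      (Filter.Eventually.of_forall fun q => sub_nonneg.2 (min_le_left _ _))).symm
  have hτtop : τ ≠ ⊤ := by rw [hτa]; exact ENNReal.ofReal_ne_top
  have hτ'eq : ∫⁻ q, wb q ∂Υ = τ := by
    have h1 : ENNReal.ofReal (∫ q, (q.2.2 - min q.1.2 q.2.2) ∂Υ) = ∫⁻ q, wb q ∂Υ :=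
      ofReal_integral_eq_lintegral_ofReal hint2
        (Filter.Eventually.of_forall fun q => sub_nonneg.2 (min_le_right _ _))
    rw [← h1, hτa]
    congr 1
    rw [integral_sub hiα1 him, integral_sub hiα2 him, hα1int, hα2int]
  -- masses
  have hρu : ρ Set.univ = τ := by
    rw [hρ, Measure.map_apply hπ1 MeasurableSet.univ, Set.preimage_univ,
      withDensity_apply _ MeasurableSet.univ, Measure.restrict_univ, hτ]
  have hρ'u : ρ' Set.univ = τ := by
    rw [hρ', Measure.map_apply hπ2 MeasurableSet.univ, Set.preimage_univ,
      withDensity_apply _ MeasurableSet.univ, Measure.restrict_univ, hτ'eq]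
  haveI hρfin : IsFiniteMeasure ρ := ⟨by rw [hρu, hτa]; exact ENNReal.ofReal_lt_top⟩
  haveI hρ'fin : IsFiniteMeasure ρ' := ⟨by rw [hρ'u, hτa]; exact ENNReal.ofReal_lt_top⟩
  -- decomposition of the projected measures
  have hκfst : κ.map Prod.fst = ν.map (fun q => q.1.1) := by
    rw [hκ]; exact Measure.map_map measurable_fst hπ
  have hκsnd : κ.map Prod.snd = ν.map (fun q => q.2.1) := by
    rw [hκ]; exact Measure.map_map measurable_snd hπ
  have hsplit1 : (fun q : (E × ℝ) × (E × ℝ) => ENNReal.ofReal q.1.2) =ᵐ[Υ] wm + wa := by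
    filter_upwards [haeS] with q hq
    have h1 : 0 ≤ min q.1.2 q.2.2 := le_min hq.1.2.1 hq.2.2.1
    have h2 : 0 ≤ q.1.2 - min q.1.2 q.2.2 := sub_nonneg.2 (min_le_left _ _)
    show ENNReal.ofReal q.1.2
      = ENNReal.ofReal (min q.1.2 q.2.2) + ENNReal.ofReal (q.1.2 - min q.1.2 q.2.2)
    rw [← ENNReal.ofReal_add h1 h2]
    congr 1
    ring
  have hsplit2 : (fun q : (E × ℝ) × (E × ℝ) => ENNReal.ofReal q.2.2) =ᵐ[Υ] wm + wb := by
    filter_upwards [haeS] with q hq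
    have h1 : 0 ≤ min q.1.2 q.2.2 := le_min hq.1.2.1 hq.2.2.1
    have h2 : 0 ≤ q.2.2 - min q.1.2 q.2.2 := sub_nonneg.2 (min_le_right _ _)
    show ENNReal.ofReal q.2.2
      = ENNReal.ofReal (min q.1.2 q.2.2) + ENNReal.ofReal (q.2.2 - min q.1.2 q.2.2)
    rw [← ENNReal.ofReal_add h1 h2]
    congr 1
    ring
  have hFσ : Fproj σ = κ.map Prod.fst + ρ := by
    rw [Fproj, ← hfst, aux_withDensity_map Υ measurable_fst measurable_snd.ennreal_ofReal,
      Measure.map_map measurable_fst measurable_fst]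
    have hc1 : ((fun x : E × ℝ => ENNReal.ofReal x.2) ∘ (Prod.fst : (E × ℝ) × (E × ℝ) → E × ℝ))
        = fun q : (E × ℝ) × (E × ℝ) => ENNReal.ofReal q.1.2 := rfl
    have hc2 : ((Prod.fst : E × ℝ → E) ∘ (Prod.fst : (E × ℝ) × (E × ℝ) → E × ℝ))
        = fun q : (E × ℝ) × (E × ℝ) => q.1.1 := rfl
    rw [hc1, hc2, withDensity_congr_ae hsplit1, withDensity_add_left hwm,
      Measure.map_add _ _ hπ1, hκfst, hν, hρ]
  have hFσ' : Fproj σ' = κ.map Prod.snd + ρ' := by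
    rw [Fproj, ← hsnd, aux_withDensity_map Υ measurable_snd measurable_snd.ennreal_ofReal,
      Measure.map_map measurable_fst measurable_snd]
    have hc1 : ((fun x : E × ℝ => ENNReal.ofReal x.2) ∘ (Prod.snd : (E × ℝ) × (E × ℝ) → E × ℝ))
        = fun q : (E × ℝ) × (E × ℝ) => ENNReal.ofReal q.2.2 := rfl
    have hc2 : ((Prod.fst : E × ℝ → E) ∘ (Prod.snd : (E × ℝ) × (E × ℝ) → E × ℝ))
        = fun q : (E × ℝ) × (E × ℝ) => q.2.1 := rfl
    rw [hc1, hc2, withDensity_congr_ae hsplit2, withDensity_add_left hwm,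
      Measure.map_add _ _ hπ2, hκsnd, hν, hρ']
  -- the coupling
  set Γ : Measure (E × E) := κ + τ⁻¹ • (ρ.prod ρ') with hΓ
  have hsmulρ : (τ⁻¹ * τ) • ρ = ρ := by
    rcases eq_or_ne τ 0 with h0 | h0
    · have hz : ρ = 0 := by
        apply Measure.measure_univ_eq_zero.mp; rw [hρu, h0]
      simp [hz]
    · rw [ENNReal.inv_mul_cancel h0 hτtop, one_smul]
  have hsmulρ' : (τ⁻¹ * τ) • ρ' = ρ' := by
    rcases eq_or_ne τ 0 with h0 | h0
    · have hz : ρ' = 0 := by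
        apply Measure.measure_univ_eq_zero.mp; rw [hρ'u, h0]
      simp [hz]
    · rw [ENNReal.inv_mul_cancel h0 hτtop, one_smul]
  have hmarg1 : Γ.map Prod.fst = Fproj σ := by
    rw [hΓ, Measure.map_add _ _ measurable_fst, Measure.map_smul,
      aux_map_fst_prod, hρ'u, smul_smul, hsmulρ, hFσ]
  have hmarg2 : Γ.map Prod.snd = Fproj σ' := by
    rw [hΓ, Measure.map_add _ _ measurable_snd, Measure.map_smul,
      aux_map_snd_prod, hρu, smul_smul, hsmulρ', hFσ']
  -- the lifted cost lintegral
  set J : ℝ≥0∞ := ∫⁻ q, ENNReal.ofReal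
    (Real.sqrt (dist q.1.1 q.2.1 ^ 2 + dist q.1.2 q.2.2 ^ 2) ^ p) ∂Υ with hJ
  have hptE : ∀ q : (E × ℝ) × (E × ℝ),
      dist q.1.1 q.2.1 ≤ Real.sqrt (dist q.1.1 q.2.1 ^ 2 + dist q.1.2 q.2.2 ^ 2) := by
    intro q
    conv_lhs => rw [← Real.sqrt_sq (dist_nonneg (x := q.1.1) (y := q.2.1))]
    exact Real.sqrt_le_sqrt (le_add_of_nonneg_right (sq_nonneg _))
  have hptR : ∀ q : (E × ℝ) × (E × ℝ),
      |q.1.2 - q.2.2| ≤ Real.sqrt (dist q.1.1 q.2.1 ^ 2 + dist q.1.2 q.2.2 ^ 2) := by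
    intro q
    rw [← Real.dist_eq]
    conv_lhs => rw [← Real.sqrt_sq (dist_nonneg (x := q.1.2) (y := q.2.2))]
    exact Real.sqrt_le_sqrt (le_add_of_nonneg_left (sq_nonneg _))
  have hjen : ∀ f : (E × ℝ) × (E × ℝ) → ℝ, Measurable f → (∀ q, 0 ≤ f q) →
      (∀ q, f q ≤ Real.sqrt (dist q.1.1 q.2.1 ^ 2 + dist q.1.2 q.2.2 ^ 2)) →
      ∫⁻ q, ENNReal.ofReal (f q) ∂Υ ≤ J ^ (1 / p) := by
    intro f hf h0 hle
    calc ∫⁻ q, ENNReal.ofReal (f q) ∂Υ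
        ≤ (∫⁻ q, ENNReal.ofReal (f q) ^ p ∂Υ) ^ (1 / p) :=
          aux_jensenE Υ hf.ennreal_ofReal.aemeasurable hp
      _ ≤ J ^ (1 / p) := by
          refine ENNReal.rpow_le_rpow ?_ h1p
          refine lintegral_mono fun q => ?_
          rw [ENNReal.ofReal_rpow_of_nonneg (h0 q) hp0']
          exact ENNReal.ofReal_le_ofReal
            (Real.rpow_le_rpow (h0 q) (hle q) hp0')
  -- term 1
  have hT1 : ∫⁻ y, ENNReal.ofReal (dist y.1 y.2 ^ p) ∂κ
      ≤ ENNReal.ofReal (D * A ^ (p - 1)) * J ^ (1 / p) := by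
    have hgg : Measurable fun q : (E × ℝ) × (E × ℝ) =>
        ENNReal.ofReal (dist q.1.1 q.2.1 ^ p) :=
      (((continuous_fst.fst.dist continuous_snd.fst).rpow_const
        fun _ => Or.inr hp0').measurable).ennreal_ofReal
    have e1 : ∫⁻ y, ENNReal.ofReal (dist y.1 y.2 ^ p) ∂κ
        = ∫⁻ q, wm q * ENNReal.ofReal (dist q.1.1 q.2.1 ^ p) ∂Υ := by
      rw [hκ, lintegral_map hcE.ennreal_ofReal hπ, hν]
      exact lintegral_withDensity_eq_lintegral_mul Υ hwm hgg
    rw [e1]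
    calc ∫⁻ q, wm q * ENNReal.ofReal (dist q.1.1 q.2.1 ^ p) ∂Υ
        ≤ ∫⁻ q, ENNReal.ofReal (D * A ^ (p - 1)) * ENNReal.ofReal (dist q.1.1 q.2.1) ∂Υ := by
          refine lintegral_mono_ae ?_
          filter_upwards [haeS] with q hq
          have hdle : dist q.1.1 q.2.1 ≤ A := Metric.dist_le_diam_of_mem hΘ hq.1.1 hq.2.1
          have h1 : wm q ≤ ENNReal.ofReal D := by
            rw [hwm_def]
            exact ENNReal.ofReal_le_ofReal (le_trans (min_le_left _ _) hq.1.2.2)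
          have h2 : ENNReal.ofReal (dist q.1.1 q.2.1 ^ p)
              ≤ ENNReal.ofReal (A ^ (p - 1) * dist q.1.1 q.2.1) :=
            ENNReal.ofReal_le_ofReal (aux_rpow_le A dist_nonneg hdle hp)
          calc wm q * ENNReal.ofReal (dist q.1.1 q.2.1 ^ p)
              ≤ ENNReal.ofReal D * ENNReal.ofReal (A ^ (p - 1) * dist q.1.1 q.2.1) :=
                mul_le_mul' h1 h2
            _ = ENNReal.ofReal (D * A ^ (p - 1)) * ENNReal.ofReal (dist q.1.1 q.2.1) := by
                rw [← ENNReal.ofReal_mul hD.le, ← ENNReal.ofReal_mul (by positivity)]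
                ring_nf
      _ = ENNReal.ofReal (D * A ^ (p - 1)) * ∫⁻ q, ENNReal.ofReal (dist q.1.1 q.2.1) ∂Υ :=
          lintegral_const_mul _ hdE.ennreal_ofReal
      _ ≤ ENNReal.ofReal (D * A ^ (p - 1)) * J ^ (1 / p) :=
          mul_le_mul_right (hjen _ hdE (fun q => dist_nonneg) hptE) _
  -- term 2 : concentration of ρ, ρ' on the closure of Θ
  have hρc : ρ (closure Θ)ᶜ = 0 := by
    rw [hρ, Measure.map_apply hπ1 isClosed_closure.measurableSet.compl]
    refine (withDensity_absolutelyContinuous Υ wa) ?_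
    have h1 : ∀ᵐ q ∂Υ, q.1.1 ∈ closure Θ := by
      filter_upwards [haeS] with q hq
      exact subset_closure hq.1.1
    exact ae_iff.mp h1
  have hρ'c : ρ' (closure Θ)ᶜ = 0 := by
    rw [hρ', Measure.map_apply hπ2 isClosed_closure.measurableSet.compl]
    refine (withDensity_absolutelyContinuous Υ wb) ?_
    have h1 : ∀ᵐ q ∂Υ, q.2.1 ∈ closure Θ := by
      filter_upwards [haeS] with q hq
      exact subset_closure hq.2.1
    exact ae_iff.mp h1
  have hprodae : ∀ᵐ y ∂(ρ.prod ρ'), dist y.1 y.2 ≤ A := by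
    rw [ae_iff]
    have hsub : {y : E × E | ¬ dist y.1 y.2 ≤ A}
        ⊆ ((closure Θ)ᶜ ×ˢ Set.univ) ∪ (Set.univ ×ˢ (closure Θ)ᶜ) := by
      intro y hy
      simp only [Set.mem_union, Set.mem_prod, Set.mem_compl_iff, Set.mem_univ, and_true,
        true_and]
      by_contra hc
      push_neg at hc
      refine hy ?_
      show dist y.1 y.2 ≤ A
      rw [hAdef, ← Metric.diam_closure]
      exact Metric.dist_le_diam_of_mem hΘ.closure hc.1 hc.2
    refine measure_mono_null hsub (measure_union_null ?_ ?_)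
    · rw [Measure.prod_prod, hρc, zero_mul]
    · rw [Measure.prod_prod, hρ'c, mul_zero]
  have hprodbd : ∫⁻ y, ENNReal.ofReal (dist y.1 y.2 ^ p) ∂(ρ.prod ρ')
      ≤ ENNReal.ofReal (A ^ p) * (τ * τ) := by
    calc ∫⁻ y, ENNReal.ofReal (dist y.1 y.2 ^ p) ∂(ρ.prod ρ')
        ≤ ∫⁻ _, ENNReal.ofReal (A ^ p) ∂(ρ.prod ρ') := by
          refine lintegral_mono_ae ?_
          filter_upwards [hprodae] with y hy
          exact ENNReal.ofReal_le_ofReal (Real.rpow_le_rpow dist_nonneg hy hp0')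
      _ = ENNReal.ofReal (A ^ p) * (τ * τ) := by
          rw [lintegral_const, ← Set.univ_prod_univ, Measure.prod_prod, hρu, hρ'u]
  -- τ ≤ J^(1/p)
  have hτle : τ ≤ J ^ (1 / p) := by
    rw [hτ]
    calc ∫⁻ q, wa q ∂Υ
        ≤ ∫⁻ q, ENNReal.ofReal (|q.1.2 - q.2.2|) ∂Υ := by
          refine lintegral_mono fun q => ?_
          rw [hwa_def]
          refine ENNReal.ofReal_le_ofReal ?_
          rcases le_total q.1.2 q.2.2 with h | h
          · rw [min_eq_left h]; simp [abs_nonneg]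
          · rw [min_eq_right h]; exact le_abs_self _
      _ ≤ J ^ (1 / p) := hjen _ hdR (fun q => abs_nonneg _) hptR
  -- total cost bound
  have hL : ∫⁻ y, ENNReal.ofReal (dist y.1 y.2 ^ p) ∂Γ
      ≤ ENNReal.ofReal (A ^ (p - 1) * (A + D)) * J ^ (1 / p) := by
    rw [hΓ, lintegral_add_measure, lintegral_smul_measure]
    have hT2 : τ⁻¹ * ∫⁻ y, ENNReal.ofReal (dist y.1 y.2 ^ p) ∂(ρ.prod ρ')
        ≤ ENNReal.ofReal (A ^ p) * τ := by
      calc τ⁻¹ * ∫⁻ y, ENNReal.ofReal (dist y.1 y.2 ^ p) ∂(ρ.prod ρ')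
          ≤ τ⁻¹ * (ENNReal.ofReal (A ^ p) * (τ * τ)) := mul_le_mul_right hprodbd _
        _ ≤ ENNReal.ofReal (A ^ p) * τ := by
            rcases eq_or_ne τ 0 with h0 | h0
            · simp [h0]
            · rw [show τ⁻¹ * (ENNReal.ofReal (A ^ p) * (τ * τ))
                  = ENNReal.ofReal (A ^ p) * ((τ⁻¹ * τ) * τ) by ring,
                ENNReal.inv_mul_cancel h0 hτtop, one_mul]
    have hApow : A ^ p = A ^ (p - 1) * A := by
      have h : A ^ (p - 1 + 1) = A ^ (p - 1) * A ^ (1:ℝ) :=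
        Real.rpow_add' hA0 (by linarith)
      have hpe : p - 1 + 1 = p := by ring
      rw [hpe, Real.rpow_one] at h
      exact h
    calc (∫⁻ y, ENNReal.ofReal (dist y.1 y.2 ^ p) ∂κ)
          + τ⁻¹ * ∫⁻ y, ENNReal.ofReal (dist y.1 y.2 ^ p) ∂(ρ.prod ρ')
        ≤ ENNReal.ofReal (D * A ^ (p - 1)) * J ^ (1 / p) + ENNReal.ofReal (A ^ p) * τ :=
          add_le_add hT1 hT2
      _ ≤ ENNReal.ofReal (D * A ^ (p - 1)) * J ^ (1 / p)
          + ENNReal.ofReal (A ^ p) * J ^ (1 / p) :=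
          add_le_add_right (mul_le_mul_right hτle _) _
      _ = ENNReal.ofReal (A ^ (p - 1) * (A + D)) * J ^ (1 / p) := by
          rw [← add_mul, ← ENNReal.ofReal_add (by positivity)
            (Real.rpow_nonneg hA0 p)]
          congr 2
          rw [hApow]
          ring
  -- J is finite
  have hJne : J ≠ ⊤ := by
    have hb : ∀ᵐ q ∂Υ, ENNReal.ofReal
        (Real.sqrt (dist q.1.1 q.2.1 ^ 2 + dist q.1.2 q.2.2 ^ 2) ^ p)
        ≤ ENNReal.ofReal (Real.sqrt (A ^ 2 + D ^ 2) ^ p) := by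
      filter_upwards [haeS] with q hq
      refine ENNReal.ofReal_le_ofReal ?_
      refine Real.rpow_le_rpow (Real.sqrt_nonneg _) ?_ hp0'
      refine Real.sqrt_le_sqrt ?_
      have h1 : dist q.1.1 q.2.1 ≤ A := Metric.dist_le_diam_of_mem hΘ hq.1.1 hq.2.1
      have h2 : dist q.1.2 q.2.2 ≤ D := by
        rw [Real.dist_eq, abs_le]
        exact ⟨by linarith [hq.1.2.1, hq.2.2.2], by linarith [hq.1.2.2, hq.2.2.1]⟩
      exact add_le_add (pow_le_pow_left₀ dist_nonneg h1 2) (pow_le_pow_left₀ dist_nonneg h2 2)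
    have hle := lintegral_mono_ae hb
    rw [lintegral_const] at hle
    rw [hJ]
    exact ne_top_of_le_ne_top (by finiteness) hle
  -- convert to real integrals
  have hIeq : ∫ q, Real.sqrt (dist q.1.1 q.2.1 ^ 2 + dist q.1.2 q.2.2 ^ 2) ^ p ∂Υ
      = J.toReal := by
    rw [hJ]
    exact integral_eq_lintegral_of_nonneg_ae
      (Filter.Eventually.of_forall fun q => Real.rpow_nonneg (Real.sqrt_nonneg _) p)
      hcL.aestronglyMeasurable
  have hGeq : ∫ y, dist y.1 y.2 ^ p ∂Γ
      = (∫⁻ y, ENNReal.ofReal (dist y.1 y.2 ^ p) ∂Γ).toReal :=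
    integral_eq_lintegral_of_nonneg_ae
      (Filter.Eventually.of_forall fun y => Real.rpow_nonneg dist_nonneg p)
      hcE.aestronglyMeasurable
  have hK0 : 0 ≤ A ^ (p - 1) * (A + D) := by positivity
  have htc : transportCost (fun a b => dist a b ^ p) (Fproj σ) (Fproj σ')
      ≤ ∫ y, dist y.1 y.2 ^ p ∂Γ := by
    refine csInf_le ?_ ?_
    · refine ⟨0, fun x hx => ?_⟩
      obtain ⟨m, _, rfl⟩ := hx
      exact integral_nonneg fun q => Real.rpow_nonneg dist_nonneg p
    · exact ⟨Γ, ⟨hmarg1, hmarg2⟩, rfl⟩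
  calc transportCost (fun a b => dist a b ^ p) (Fproj σ) (Fproj σ')
      ≤ ∫ y, dist y.1 y.2 ^ p ∂Γ := htc
    _ = (∫⁻ y, ENNReal.ofReal (dist y.1 y.2 ^ p) ∂Γ).toReal := hGeq
    _ ≤ (ENNReal.ofReal (A ^ (p - 1) * (A + D)) * J ^ (1 / p)).toReal := by
        refine ENNReal.toReal_mono ?_ hL
        exact ENNReal.mul_ne_top ENNReal.ofReal_ne_top
          (ENNReal.rpow_ne_top_of_nonneg h1p hJne)
    _ = (A ^ (p - 1) * (A + D)) *
        (∫ q, Real.sqrt (dist q.1.1 q.2.1 ^ 2 + dist q.1.2 q.2.2 ^ 2) ^ p ∂Υ) ^ (1 / p) := by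
        rw [ENNReal.toReal_mul, ENNReal.toReal_ofReal hK0, hIeq, ENNReal.toReal_rpow]

end Key

/-- Lipschitz continuity of the projection map `F` with respect to
Wasserstein distances. -/
theorem stmt1 {d : ℕ} (Θ : Set (EuclideanSpace ℝ (Fin d))) (hΘ : Bornology.IsBounded Θ)
    (D : ℝ) (hD : 0 < D)
    (σ σ' : Measure (EuclideanSpace ℝ (Fin d) × ℝ))
    [IsProbabilityMeasure σ] [IsProbabilityMeasure σ']
    (hσ : σ (Θ ×ˢ Set.Icc (0:ℝ) D)ᶜ = 0) (hσ' : σ' (Θ ×ˢ Set.Icc (0:ℝ) D)ᶜ = 0)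
    (hσ1 : ∫ p, p.2 ∂σ = 1) (hσ'1 : ∫ p, p.2 ∂σ' = 1)
    (p : ℝ) (hp : 1 ≤ p) :
    WpE p (Fproj σ) (Fproj σ') ^ p ≤
      Metric.diam Θ ^ (p - 1) * (Metric.diam Θ + D) * WpLift p σ σ' := by
  have hp0 : (0:ℝ) < p := lt_of_lt_of_le one_pos hp
  have h1p : (0:ℝ) ≤ 1 / p := by positivity
  set c : (EuclideanSpace ℝ (Fin d) × ℝ) → (EuclideanSpace ℝ (Fin d) × ℝ) → ℝ :=
    fun a b => Real.sqrt (dist a.1 b.1 ^ 2 + dist a.2 b.2 ^ 2) ^ p with hc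
  set S := ((fun Υ : Measure ((EuclideanSpace ℝ (Fin d) × ℝ) × (EuclideanSpace ℝ (Fin d) × ℝ))
      => ∫ q, c q.1 q.2 ∂Υ) ''
    {Υ | Υ.map Prod.fst = σ ∧ Υ.map Prod.snd = σ'}) with hS
  have hScost : WpLift p σ σ' = (sInf S) ^ (1 / p) := rfl
  set A := Metric.diam Θ with hAdef
  have hA0 : 0 ≤ A := Metric.diam_nonneg
  set K := A ^ (p - 1) * (A + D) with hK
  have hK0 : 0 ≤ K := by positivity
  -- nonnegativity of elements of S
  have hSnonneg : ∀ s ∈ S, (0:ℝ) ≤ s := by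
    rintro s ⟨Υ, _, rfl⟩
    exact integral_nonneg fun q => Real.rpow_nonneg (Real.sqrt_nonneg _) p
  -- key bound on each element of S
  have hkey : ∀ s ∈ S, transportCost (fun a b => dist a b ^ p) (Fproj σ) (Fproj σ')
      ≤ K * s ^ (1 / p) := by
    rintro s ⟨Υ, ⟨hf, hs⟩, rfl⟩
    exact key_coupling Θ hΘ D hD σ σ' hσ hσ' hσ1 hσ'1 p hp Υ hf hs
  -- S is nonempty
  have hSne : S.Nonempty := by
    refine ⟨∫ q, c q.1 q.2 ∂(σ.prod σ'), σ.prod σ', ⟨?_, ?_⟩, rfl⟩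
    · rw [aux_map_fst_prod, measure_univ, one_smul]
    · rw [aux_map_snd_prod, measure_univ, one_smul]
  set T := transportCost (fun a b => dist a b ^ p) (Fproj σ) (Fproj σ') with hT
  have hT0 : 0 ≤ T := by
    refine Real.sInf_nonneg ?_
    rintro x ⟨Υ, _, rfl⟩
    exact integral_nonneg fun q => Real.rpow_nonneg dist_nonneg p
  -- rewrite the LHS
  have hLHS : WpE p (Fproj σ) (Fproj σ') ^ p = T := by
    rw [WpE, ← hT, ← Real.rpow_mul hT0, one_div_mul_cancel hp0.ne', Real.rpow_one]
  rw [hLHS, hScost]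
  -- now : T ≤ K * (sInf S) ^ (1/p)
  rcases eq_or_lt_of_le hK0 with hKz | hKpos
  · obtain ⟨s, hsS⟩ := hSne
    have := hkey s hsS
    rw [← hKz, zero_mul] at this ⊢
    exact this
  · have h1 : ∀ s ∈ S, (T / K) ^ p ≤ s := by
      intro s hsS
      have h2 := hkey s hsS
      have hs0 := hSnonneg s hsS
      have h3 : T / K ≤ s ^ (1 / p) := (div_le_iff₀ hKpos).2 (by
        rw [mul_comm]; exact h2)
      calc (T / K) ^ p ≤ (s ^ (1 / p)) ^ p :=
            Real.rpow_le_rpow (div_nonneg hT0 hKpos.le) h3 hp0.le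
        _ = s := by
            rw [← Real.rpow_mul hs0, one_div_mul_cancel hp0.ne', Real.rpow_one]
    have h4 : (T / K) ^ p ≤ sInf S := le_csInf hSne h1
    have h5 : T / K ≤ (sInf S) ^ (1 / p) := by
      calc T / K = ((T / K) ^ p) ^ (1 / p) := by
            rw [← Real.rpow_mul (div_nonneg hT0 hKpos.le), mul_one_div_cancel hp0.ne',
              Real.rpow_one]
        _ ≤ (sInf S) ^ (1 / p) :=
            Real.rpow_le_rpow (Real.rpow_nonneg (div_nonneg hT0 hKpos.le) p) h4 h1p
    calc T = (T / K) * K := by field_simp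
      _ ≤ (sInf S) ^ (1 / p) * K := mul_le_mul_of_nonneg_right h5 hKpos.le
      _ = K * (sInf S) ^ (1 / p) := mul_comm _ _
end

section
/- Let Θ ⊆ ℝᵈ be compact with |B(θ, ε) ∩ Θ| ≥ k′ εᵈ for all θ ∈ Θ, and let ν₀ be a probability measure on Θ with Lebesgue density bounded below by k > 0. For ε ∈ (0,1] and a probability measure ν* on Θ, define ν^ε(A) := ∫_Θ |B(θ, ε) ∩ A| / |B(θ, ε) ∩ Θ| dν*(θ). Then the relative entropy satisfies H(ν^ε ‖ ν₀) ≤ −log k − log k′ − d·log ε. -/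
open MeasureTheory
open scoped ENNReal

/-- Relative entropy (KL divergence) `H(μ‖ν) = ∫ log (dμ/dν) dμ` (for `μ ≪ ν`). -/
noncomputable def relEnt {X : Type*} [MeasurableSpace X] (μ ν : Measure X) : ℝ :=
  ∫ a, Real.log ((μ.rnDeriv ν) a).toReal ∂μ

/-- entropy bound for the mollified measure `ν^ε` relative to `ν₀`. -/
theorem stmt4 {d : ℕ} (Θ : Set (EuclideanSpace ℝ (Fin d))) (hΘ : IsCompact Θ)
    (k k' : ℝ) (hk : 0 < k) (hk' : 0 < k')
    (hball : ∀ θ ∈ Θ, ∀ ε ∈ Set.Ioc (0:ℝ) 1,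
      ENNReal.ofReal (k' * ε ^ d) ≤ volume (Metric.ball θ ε ∩ Θ))
    (ν₀ : Measure (EuclideanSpace ℝ (Fin d))) [IsProbabilityMeasure ν₀]
    (f : EuclideanSpace ℝ (Fin d) → ℝ≥0∞)
    (hν₀ : ν₀ = volume.withDensity f)
    (hν₀Θ : ν₀ Θᶜ = 0)
    (hfk : ∀ θ ∈ Θ, ENNReal.ofReal k ≤ f θ)
    (νs : Measure (EuclideanSpace ℝ (Fin d))) [IsProbabilityMeasure νs] (hνs : νs Θᶜ = 0)
    (ε : ℝ) (hε : ε ∈ Set.Ioc (0:ℝ) 1)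
    (νε : Measure (EuclideanSpace ℝ (Fin d))) [IsProbabilityMeasure νε]
    (hνε : ∀ A : Set (EuclideanSpace ℝ (Fin d)), MeasurableSet A →
      νε A = ∫⁻ θ, volume (Metric.ball θ ε ∩ A) / volume (Metric.ball θ ε ∩ Θ) ∂νs) :
    relEnt νε ν₀ ≤ -Real.log k - Real.log k' - (d : ℝ) * Real.log ε := by
  obtain ⟨hε0, hε1⟩ := hε
  have mΘ : MeasurableSet Θ := hΘ.isClosed.measurableSet
  have hεd : 0 < k' * ε ^ d := by positivity
  set c : ℝ := k * (k' * ε ^ d) with hc_def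
  have hc : 0 < c := by positivity
  have haeΘ : ∀ᵐ θ ∂νs, θ ∈ Θ := by
    rw [ae_iff]
    exact hνs
  -- the denominator is bounded below and finite, a.e. θ
  have hden : ∀ θ ∈ Θ, ENNReal.ofReal (k' * ε ^ d) ≤ volume (Metric.ball θ ε ∩ Θ) :=
    fun θ hθ => hball θ hθ ε ⟨hε0, hε1⟩
  have hden_ne : ∀ θ ∈ Θ, volume (Metric.ball θ ε ∩ Θ) ≠ 0 := fun θ hθ =>
    (lt_of_lt_of_le (ENNReal.ofReal_pos.mpr hεd) (hden θ hθ)).ne'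
  have hden_fin : ∀ (θ : EuclideanSpace ℝ (Fin d)), volume (Metric.ball θ ε ∩ Θ) ≠ ∞ :=
    fun θ => ((measure_mono Set.inter_subset_left).trans_lt measure_ball_lt_top).ne
  -- νε is concentrated on Θ
  have hνεΘ : νε Θ = 1 := by
    rw [hνε Θ mΘ]
    have h1 : ∀ᵐ θ ∂νs,
        volume (Metric.ball θ ε ∩ Θ) / volume (Metric.ball θ ε ∩ Θ) = 1 := by
      filter_upwards [haeΘ] with θ hθ
      exact ENNReal.div_self (hden_ne θ hθ) (hden_fin θ)
    rw [lintegral_congr_ae h1, lintegral_one, measure_univ]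
  have hνεΘc : νε Θᶜ = 0 := (prob_compl_eq_zero_iff mΘ).mpr hνεΘ
  -- lower bound on ν₀ via the density
  have hk3 : ∀ A : Set (EuclideanSpace ℝ (Fin d)), MeasurableSet A →
      ENNReal.ofReal k * volume (A ∩ Θ) ≤ ν₀ A := by
    intro A hA
    have h0 : ν₀ (A ∩ Θ) = ∫⁻ x in A ∩ Θ, f x ∂volume := by
      rw [hν₀, withDensity_apply _ (hA.inter mΘ)]
    calc ENNReal.ofReal k * volume (A ∩ Θ)
        = ∫⁻ _ in A ∩ Θ, ENNReal.ofReal k ∂volume := by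
          rw [setLIntegral_const, mul_comm]
      _ ≤ ∫⁻ x in A ∩ Θ, f x ∂volume := by
          refine lintegral_mono_ae ?_
          rw [ae_restrict_iff' (hA.inter mΘ)]
          exact Filter.Eventually.of_forall fun x hx => hfk x hx.2
      _ = ν₀ (A ∩ Θ) := h0.symm
      _ ≤ ν₀ A := measure_mono Set.inter_subset_left
  -- the scaling constant, as an NNReal
  set r : NNReal := (Real.toNNReal c)⁻¹ with hr_def
  have hcNN : Real.toNNReal c ≠ 0 := by
    simp [Real.toNNReal_eq_zero, not_le, hc]
  have hr0 : r ≠ 0 := by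
    simp [hr_def, inv_eq_zero, hcNN]
  have hrcoe : (r : ℝ≥0∞) = (ENNReal.ofReal c)⁻¹ := by
    rw [hr_def, ENNReal.coe_inv hcNN]
    rfl
  -- νε ≤ r • ν₀
  have h_le : νε ≤ r • ν₀ := by
    rw [Measure.le_iff]
    intro A hA
    have h1 : νε A ≤ νε (A ∩ Θ) := by
      calc νε A ≤ νε ((A ∩ Θ) ∪ Θᶜ) := by
            refine measure_mono fun x hx => ?_
            by_cases h : x ∈ Θ
            · exact Or.inl ⟨hx, h⟩
            · exact Or.inr h
        _ ≤ νε (A ∩ Θ) + νε Θᶜ := measure_union_le _ _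
        _ = νε (A ∩ Θ) := by rw [hνεΘc, add_zero]
    have h2 : νε (A ∩ Θ) ≤ volume (A ∩ Θ) / ENNReal.ofReal (k' * ε ^ d) := by
      rw [hνε _ (hA.inter mΘ)]
      calc ∫⁻ θ, volume (Metric.ball θ ε ∩ (A ∩ Θ)) / volume (Metric.ball θ ε ∩ Θ) ∂νs
          ≤ ∫⁻ _, volume (A ∩ Θ) / ENNReal.ofReal (k' * ε ^ d) ∂νs := by
            refine lintegral_mono_ae ?_
            filter_upwards [haeΘ] with θ hθ
            exact ENNReal.div_le_div (measure_mono Set.inter_subset_right) (hden θ hθ)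
        _ = volume (A ∩ Θ) / ENNReal.ofReal (k' * ε ^ d) := by
            rw [lintegral_const, measure_univ, mul_one]
    have key : ENNReal.ofReal c * νε A ≤ ν₀ A := by
      calc ENNReal.ofReal c * νε A
          = ENNReal.ofReal k * (ENNReal.ofReal (k' * ε ^ d) * νε A) := by
            rw [hc_def, ENNReal.ofReal_mul hk.le, mul_assoc]
        _ ≤ ENNReal.ofReal k * (ENNReal.ofReal (k' * ε ^ d) *
              (volume (A ∩ Θ) / ENNReal.ofReal (k' * ε ^ d))) := by
            gcongr
            exact h1.trans h2
        _ = ENNReal.ofReal k * volume (A ∩ Θ) := by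
            rw [ENNReal.mul_div_cancel (ENNReal.ofReal_pos.mpr hεd).ne' ENNReal.ofReal_ne_top]
        _ ≤ ν₀ A := hk3 A hA
    have : νε A ≤ ν₀ A / ENNReal.ofReal c := by
      rw [ENNReal.le_div_iff_mul_le (Or.inl (ENNReal.ofReal_pos.mpr hc).ne')
        (Or.inl ENNReal.ofReal_ne_top)]
      rw [mul_comm]
      exact key
    simpa [Measure.smul_apply, smul_eq_mul, hrcoe, ENNReal.div_eq_inv_mul] using this
  -- absolute continuity
  have hac : νε ≪ ν₀ := by
    refine (Measure.absolutelyContinuous_of_le h_le).trans ?_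
    refine Measure.AbsolutelyContinuous.mk fun s hs h0 => ?_
    simp [Measure.smul_apply, h0]
  -- bound on the Radon-Nikodym derivative
  have hbound : ∀ᵐ x ∂ν₀, νε.rnDeriv ν₀ x ≤ (r : ℝ≥0∞) := by
    have h1 : νε.rnDeriv (r • ν₀) ≤ᵐ[r • ν₀] 1 := Measure.rnDeriv_le_one_of_le h_le
    have hac2 : ν₀ ≪ (r : ℝ≥0∞) • ν₀ :=
      Measure.absolutelyContinuous_smul (by exact_mod_cast hr0)
    have h1' : νε.rnDeriv (r • ν₀) ≤ᵐ[ν₀] 1 := hac2.ae_le h1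
    have hsmul : νε.rnDeriv (r • ν₀) =ᵐ[ν₀] r⁻¹ • νε.rnDeriv ν₀ :=
      Measure.rnDeriv_smul_right' νε ν₀ hr0
    filter_upwards [h1', hsmul] with x hx1 hx2
    have hx3 : (r⁻¹ : ℝ≥0∞) * νε.rnDeriv ν₀ x ≤ 1 := by
      have := hx2 ▸ hx1
      simpa [ENNReal.smul_def, ENNReal.coe_inv hr0] using this
    rw [ENNReal.inv_mul_le_iff (by exact_mod_cast hr0) ENNReal.coe_ne_top] at hx3
    simpa using hx3
  have hboundε : ∀ᵐ x ∂νε, νε.rnDeriv ν₀ x ≤ (r : ℝ≥0∞) := hbound.filter_mono hac.ae_le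
  -- c ≤ 1
  have hΘne : Θ.Nonempty := by
    rcases Set.eq_empty_or_nonempty Θ with h | h
    · exfalso
      have : νs Θᶜ = 1 := by simp [h]
      rw [hνs] at this
      exact zero_ne_one this
    · exact h
  have hc1 : c ≤ 1 := by
    obtain ⟨θ₀, hθ₀⟩ := hΘne
    have h1 : ENNReal.ofReal c ≤ ν₀ Set.univ := by
      calc ENNReal.ofReal c = ENNReal.ofReal k * ENNReal.ofReal (k' * ε ^ d) := by
            rw [hc_def, ENNReal.ofReal_mul hk.le]
        _ ≤ ENNReal.ofReal k * volume (Set.univ ∩ Θ) := by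
            gcongr
            exact (hden θ₀ hθ₀).trans (measure_mono (by simp [Set.inter_subset_right]))
        _ ≤ ν₀ Set.univ := hk3 Set.univ MeasurableSet.univ
    rw [measure_univ] at h1
    exact (ENNReal.ofReal_le_one).mp h1
  have hLnn : 0 ≤ Real.log c⁻¹ := Real.log_nonneg (one_le_inv_iff₀.mpr ⟨hc, hc1⟩)
  -- bound the log a.e.
  have hlog : ∀ᵐ x ∂νε, Real.log ((νε.rnDeriv ν₀) x).toReal ≤ Real.log c⁻¹ := by
    filter_upwards [hboundε] with x hx
    have htr : ((νε.rnDeriv ν₀) x).toReal ≤ c⁻¹ := by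
      have h1 : ((νε.rnDeriv ν₀) x).toReal ≤ ((r : ℝ≥0∞)).toReal :=
        ENNReal.toReal_mono ENNReal.coe_ne_top hx
      have h2 : ((r : ℝ≥0∞)).toReal = c⁻¹ := by
        rw [hrcoe, ← ENNReal.ofReal_inv_of_pos hc]
        exact ENNReal.toReal_ofReal (by positivity)
      linarith [h2 ▸ h1]
    rcases lt_or_eq_of_le (ENNReal.toReal_nonneg :
        (0:ℝ) ≤ ((νε.rnDeriv ν₀) x).toReal) with hpos | hzero
    · exact (Real.log_le_log_iff hpos (by positivity)).mpr htr
    · rw [← hzero, Real.log_zero]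
      exact hLnn
  -- conclude
  have hmain : relEnt νε ν₀ ≤ Real.log c⁻¹ := by
    rw [relEnt]
    by_cases hint : Integrable (fun x => Real.log ((νε.rnDeriv ν₀) x).toReal) νε
    · calc ∫ x, Real.log ((νε.rnDeriv ν₀) x).toReal ∂νε
          ≤ ∫ _, Real.log c⁻¹ ∂νε := integral_mono_ae hint (integrable_const _) hlog
        _ = Real.log c⁻¹ := by simp
    · rw [integral_undef hint]
      exact hLnn
  refine hmain.trans_eq ?_
  rw [Real.log_inv, hc_def, Real.log_mul hk.ne' (by positivity),
    Real.log_mul hk'.ne' (by positivity), Real.log_pow]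
  ring
end

section
/- (Triangle inequality for the conditional-Wasserstein cost.) Let π¹, π², π³ be probability measures on Z × Z such that π² and π³ have the same first marginal: π²_z = π³_z. Define, for probability measures ρ, ρ′ on Z × Z, W̃(ρ, ρ′) := inf over υ ∈ Γ_Opt(ρ_z, ρ′_z) of ∫ W₁(ρ(·|z), ρ′(·|z′)) dυ(z, z′), where Γ_Opt denotes the set of couplings optimal for W₁ between the first marginals and ρ(·|z) is the conditional of the second coordinate given the first. Then W̃(π¹, π³) ≤ W̃(π¹, π²) + W̃(π², π³); in particular, since π²_z = π³_z, the only optimal coupling between π²_z and π³_z in the second term can be taken to be the identity coupling, so W̃(π², π³) = ∫ W₁(π²(·|z), π³(·|z)) dπ²_z(z). -/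
open MeasureTheory ProbabilityTheory

/-- The 1-Wasserstein distance, defined as the infimum of transport costs over couplings. -/
noncomputable def W1 {X : Type*} [MeasurableSpace X] [PseudoMetricSpace X]
    (μ ν : Measure X) : ℝ :=
  sInf ((fun Υ : Measure (X × X) => ∫ q, dist q.1 q.2 ∂Υ) ''
    {Υ | Υ.map Prod.fst = μ ∧ Υ.map Prod.snd = ν})

/-- `κ` is a disintegration (family of conditional distributions of the second coordinate
given the first) of the measure `ρ` on a product space. -/
def IsDisintegration {X Y : Type*} [MeasurableSpace X] [MeasurableSpace Y]
    (ρ : Measure (X × Y)) (κ : Kernel X Y) : Prop :=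
  ∀ ⦃s : Set X⦄, MeasurableSet s → ∀ ⦃t : Set Y⦄, MeasurableSet t →
    ρ (s ×ˢ t) = ∫⁻ x in s, κ x t ∂(ρ.map Prod.fst)

/-- The conditional-Wasserstein cost `W̃(ρ, ρ′)`: the infimum, over couplings `υ` of the
first marginals that are optimal for `W₁`, of `∫ W₁(ρ(·|z), ρ′(·|z′)) dυ(z, z′)`,
conditionals being represented by disintegration kernels `κ, κ′`. -/
noncomputable def condCost {X Y : Type*} [MeasurableSpace X] [PseudoMetricSpace X]
    [MeasurableSpace Y] [PseudoMetricSpace Y]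
    (ρ : Measure (X × Y)) (κ : Kernel X Y) (ρ' : Measure (X × Y)) (κ' : Kernel X Y) : ℝ :=
  sInf {c | ∃ υ : Measure (X × X),
    υ.map Prod.fst = ρ.map Prod.fst ∧ υ.map Prod.snd = ρ'.map Prod.fst ∧
    (∫ q, dist q.1 q.2 ∂υ) = W1 (ρ.map Prod.fst) (ρ'.map Prod.fst) ∧
    c = ∫ q, W1 (κ q.1) (κ' q.2) ∂υ}

open Set
open scoped ENNReal NNReal
set_option linter.unusedSectionVars false
set_option linter.unusedVariables false
set_option maxHeartbeats 1000000

namespace Stmt12Aux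

variable {Z : Type*} [MetricSpace Z] [CompactSpace Z] [MeasurableSpace Z] [BorelSpace Z]

lemma contdist : Continuous (fun q : Z × Z => dist q.1 q.2) :=
  continuous_fst.dist continuous_snd

lemma integrable_bdd {α : Type*} [MeasurableSpace α] (μ : Measure α) [IsFiniteMeasure μ]
    {g : α → ℝ} (hm : AEStronglyMeasurable g μ) {C : ℝ} (h : ∀ a, |g a| ≤ C) :
    Integrable g μ :=
  (integrable_const C).mono' hm (Filter.Eventually.of_forall h)

lemma integrable_dist (Θ : Measure (Z × Z)) [IsFiniteMeasure Θ] :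
    Integrable (fun q : Z × Z => dist q.1 q.2) Θ :=
  integrable_bdd Θ contdist.aestronglyMeasurable
    (C := Metric.diam (univ : Set Z)) (fun q => by
      rw [abs_of_nonneg dist_nonneg]
      exact Metric.dist_le_diam_of_mem isCompact_univ.isBounded (mem_univ _) (mem_univ _))

lemma integral_dist_le (Θ : Measure (Z × Z)) [IsFiniteMeasure Θ] :
    ∫ q, dist q.1 q.2 ∂Θ ≤ Metric.diam (univ : Set Z) * (Θ univ).toReal := by
  calc ∫ q, dist q.1 q.2 ∂Θ ≤ ∫ _, Metric.diam (univ : Set Z) ∂Θ := by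
        refine integral_mono (integrable_dist Θ) (integrable_const _) (fun q => ?_)
        exact Metric.dist_le_diam_of_mem isCompact_univ.isBounded (mem_univ _) (mem_univ _)
    _ = Metric.diam (univ : Set Z) * (Θ univ).toReal := by
        simp [integral_const]; rw [measureReal_def]; ring

lemma W1_nonneg (μ ν : Measure Z) : 0 ≤ W1 μ ν := by
  apply Real.sInf_nonneg
  rintro c ⟨Υ, -, rfl⟩
  exact integral_nonneg fun q => dist_nonneg

lemma W1_bddBelow (μ ν : Measure Z) :
    BddBelow ((fun Υ : Measure (Z × Z) => ∫ q, dist q.1 q.2 ∂Υ) ''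
      {Υ | Υ.map Prod.fst = μ ∧ Υ.map Prod.snd = ν}) := by
  refine ⟨0, ?_⟩
  rintro c ⟨Υ, -, rfl⟩
  exact integral_nonneg fun q => dist_nonneg

lemma W1_le {μ ν : Measure Z} {Υ : Measure (Z × Z)}
    (h1 : Υ.map Prod.fst = μ) (h2 : Υ.map Prod.snd = ν) :
    W1 μ ν ≤ ∫ q, dist q.1 q.2 ∂Υ :=
  csInf_le (W1_bddBelow μ ν) ⟨Υ, ⟨h1, h2⟩, rfl⟩

lemma prob_of_coupling {μ : Measure Z} [IsProbabilityMeasure μ] {Υ : Measure (Z × Z)}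
    (h1 : Υ.map Prod.fst = μ) : IsProbabilityMeasure Υ := by
  constructor
  rw [show Υ univ = (Υ.map Prod.fst) univ by
    rw [Measure.map_apply measurable_fst MeasurableSet.univ, preimage_univ], h1, measure_univ]

lemma W1_le_diam (μ ν : Measure Z) [IsProbabilityMeasure μ] [IsProbabilityMeasure ν] :
    W1 μ ν ≤ Metric.diam (univ : Set Z) := by
  refine le_trans (W1_le (Υ := μ.prod ν) (by simp) (by simp)) ?_
  simpa using integral_dist_le (μ.prod ν)

lemma W1_comm (μ ν : Measure Z) : W1 μ ν = W1 ν μ := by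
  have key : ∀ (μ ν : Measure Z),
      ((fun Υ : Measure (Z × Z) => ∫ q, dist q.1 q.2 ∂Υ) ''
        {Υ | Υ.map Prod.fst = μ ∧ Υ.map Prod.snd = ν}) ⊆
      ((fun Υ : Measure (Z × Z) => ∫ q, dist q.1 q.2 ∂Υ) ''
        {Υ | Υ.map Prod.fst = ν ∧ Υ.map Prod.snd = μ}) := by
    rintro μ ν c ⟨Υ, ⟨hf, hs⟩, rfl⟩
    refine ⟨Υ.map Prod.swap, ⟨?_, ?_⟩, ?_⟩
    · rw [Measure.map_map measurable_fst measurable_swap]; exact hs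
    · rw [Measure.map_map measurable_snd measurable_swap]; exact hf
    · dsimp only
      rw [integral_map measurable_swap.aemeasurable contdist.aestronglyMeasurable]
      simp [dist_comm]
  unfold W1
  rw [subset_antisymm (key μ ν) (key ν μ)]

lemma W1_self_le (μ : Measure Z) : W1 μ μ ≤ 0 := by
  have hd : Measurable fun z : Z => (z, z) := measurable_id.prodMk measurable_id
  refine le_trans (W1_le (Υ := μ.map fun z => (z, z)) ?_ ?_) ?_
  · rw [Measure.map_map measurable_fst hd]; exact Measure.map_id
  · rw [Measure.map_map measurable_snd hd]; exact Measure.map_id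
  · rw [integral_map hd.aemeasurable contdist.aestronglyMeasurable]
    simp

lemma measure_prod_ext {μ ν : Measure (Z × Z)} [IsFiniteMeasure μ] [IsFiniteMeasure ν]
    (h : ∀ ⦃s t : Set Z⦄, MeasurableSet s → MeasurableSet t → μ (s ×ˢ t) = ν (s ×ˢ t)) :
    μ = ν := by
  have huniv : μ univ = ν univ := by
    simpa using h MeasurableSet.univ MeasurableSet.univ
  refine ext_of_generate_finite _ generateFrom_prod.symm isPiSystem_prod ?_ huniv
  rintro _ ⟨s, hs, t, ht, rfl⟩
  exact h hs ht


lemma glue_le [Nonempty Z] (μ ν ξ : Measure Z) [IsProbabilityMeasure μ] [IsProbabilityMeasure ν]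
    [IsProbabilityMeasure ξ] {Υ1 Υ2 : Measure (Z × Z)}
    (h11 : Υ1.map Prod.fst = μ) (h12 : Υ1.map Prod.snd = ν)
    (h21 : Υ2.map Prod.fst = ν) (h22 : Υ2.map Prod.snd = ξ) :
    W1 μ ξ ≤ (∫ q, dist q.1 q.2 ∂Υ1) + ∫ q, dist q.1 q.2 ∂Υ2 := by
  haveI := prob_of_coupling h11
  haveI := prob_of_coupling h21
  set Υ1' : Measure (Z × Z) := Υ1.map Prod.swap with hΥ1'
  haveI : IsProbabilityMeasure Υ1' :=
    prob_of_coupling (μ := ν) (by rw [hΥ1', Measure.map_map measurable_fst measurable_swap]; exact h12)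
  have hfst1 : Υ1'.fst = ν := by
    show Υ1'.map Prod.fst = ν
    rw [hΥ1', Measure.map_map measurable_fst measurable_swap]; exact h12
  have hfst2 : Υ2.fst = ν := h21
  set κa := Υ1'.condKernel with hκa
  set κc := Υ2.condKernel with hκc
  have d1 : ν ⊗ₘ κa = Υ1' := by rw [hκa, ← hfst1]; exact Υ1'.disintegrate _
  have d2 : ν ⊗ₘ κc = Υ2 := by rw [hκc, ← hfst2]; exact Υ2.disintegrate _
  set η : Measure (Z × Z × Z) := ν ⊗ₘ (κa ×ₖ κc) with hη
  have hm1meas : Measurable (fun p : Z × Z × Z => (p.2.1, p.1)) :=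
    (measurable_fst.comp measurable_snd).prodMk measurable_fst
  have hm2meas : Measurable (fun p : Z × Z × Z => (p.1, p.2.2)) :=
    measurable_fst.prodMk (measurable_snd.comp measurable_snd)
  have hm3meas : Measurable (fun p : Z × Z × Z => (p.2.1, p.2.2)) :=
    (measurable_fst.comp measurable_snd).prodMk (measurable_snd.comp measurable_snd)
  have hm1 : η.map (fun p => (p.2.1, p.1)) = Υ1 := by
    refine measure_prod_ext fun s t hs ht => ?_
    rw [Measure.map_apply hm1meas (hs.prod ht)]
    have hpre : (fun p : Z × Z × Z => (p.2.1, p.1)) ⁻¹' (s ×ˢ t) = t ×ˢ (s ×ˢ univ) := by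
      ext p; simp [and_comm]
    rw [hpre, hη, Measure.compProd_apply_prod ht (hs.prod MeasurableSet.univ)]
    have hker : ∀ z, (κa ×ₖ κc) z (s ×ˢ univ) = κa z s := fun z => by
      rw [Kernel.prod_apply, Measure.prod_prod, measure_univ, mul_one]
    simp_rw [hker]
    rw [← Measure.compProd_apply_prod ht hs, d1, hΥ1',
      Measure.map_apply measurable_swap ((ht).prod hs)]
    congr 1
    ext p; simp [and_comm]
  have hm2 : η.map (fun p => (p.1, p.2.2)) = Υ2 := by
    refine measure_prod_ext fun s t hs ht => ?_
    rw [Measure.map_apply hm2meas (hs.prod ht)]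
    have hpre : (fun p : Z × Z × Z => (p.1, p.2.2)) ⁻¹' (s ×ˢ t) = s ×ˢ (univ ×ˢ t) := by
      ext p; simp
    rw [hpre, hη, Measure.compProd_apply_prod hs (MeasurableSet.univ.prod ht)]
    have hker : ∀ z, (κa ×ₖ κc) z (univ ×ˢ t) = κc z t := fun z => by
      rw [Kernel.prod_apply, Measure.prod_prod, measure_univ, one_mul]
    simp_rw [hker]
    rw [← Measure.compProd_apply_prod hs ht, d2]
  have hfst : (η.map fun p => (p.2.1, p.2.2)).map Prod.fst = μ := by
    rw [Measure.map_map measurable_fst hm3meas]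
    rw [show ((Prod.fst ∘ fun p : Z × Z × Z => (p.2.1, p.2.2))) = (Prod.fst ∘ fun p : Z × Z × Z => (p.2.1, p.1)) from rfl]
    rw [← Measure.map_map measurable_fst hm1meas, hm1, h11]
  have hsnd : (η.map fun p => (p.2.1, p.2.2)).map Prod.snd = ξ := by
    rw [Measure.map_map measurable_snd hm3meas]
    rw [show ((Prod.snd ∘ fun p : Z × Z × Z => (p.2.1, p.2.2))) = (Prod.snd ∘ fun p : Z × Z × Z => (p.1, p.2.2)) from rfl]
    rw [← Measure.map_map measurable_snd hm2meas, hm2, h22]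
  refine le_trans (W1_le hfst hsnd) ?_
  haveI : IsProbabilityMeasure η := by
    rw [hη]; infer_instance
  have hint : ∀ {g : Z × Z × Z → Z × Z}, Measurable g → Integrable (fun p => dist (g p).1 (g p).2) η := by
    intro g hg
    refine integrable_bdd η ((contdist.measurable.comp hg).aestronglyMeasurable)
      (C := Metric.diam (univ : Set Z)) (fun q => ?_)
    rw [abs_of_nonneg dist_nonneg]
    exact Metric.dist_le_diam_of_mem isCompact_univ.isBounded (mem_univ _) (mem_univ _)
  rw [integral_map hm3meas.aemeasurable contdist.aestronglyMeasurable]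
  have step : ∫ p, dist p.2.1 p.2.2 ∂η ≤ ∫ p, (dist p.2.1 p.1 + dist p.1 p.2.2) ∂η := by
    refine integral_mono (hint hm3meas) ?_ (fun p => dist_triangle _ _ _)
    exact ((hint hm1meas).add (hint hm2meas) : Integrable (fun p : Z × Z × Z => dist p.2.1 p.1 + dist p.1 p.2.2) η)
  refine le_trans step ?_
  rw [integral_add (hint hm1meas) (hint hm2meas)]
  have e1 : ∫ p, dist p.2.1 p.1 ∂η = ∫ q, dist q.1 q.2 ∂Υ1 := by
    rw [← hm1, integral_map hm1meas.aemeasurable contdist.aestronglyMeasurable]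
  have e2 : ∫ p, dist p.1 p.2.2 ∂η = ∫ q, dist q.1 q.2 ∂Υ2 := by
    rw [← hm2, integral_map hm2meas.aemeasurable contdist.aestronglyMeasurable]
  rw [e1, e2]

lemma W1_triangle [Nonempty Z] (μ ν ξ : Measure Z) [IsProbabilityMeasure μ] [IsProbabilityMeasure ν]
    [IsProbabilityMeasure ξ] : W1 μ ξ ≤ W1 μ ν + W1 ν ξ := by
  have hne : ∀ (α β : Measure Z) [IsProbabilityMeasure α] [IsProbabilityMeasure β],
      ((fun Υ : Measure (Z × Z) => ∫ q, dist q.1 q.2 ∂Υ) ''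
        {Υ | Υ.map Prod.fst = α ∧ Υ.map Prod.snd = β}).Nonempty := by
    intro α β _ _
    exact ⟨_, ⟨α.prod β, ⟨by simp, by simp⟩, rfl⟩⟩
  have key : ∀ c1 ∈ ((fun Υ : Measure (Z × Z) => ∫ q, dist q.1 q.2 ∂Υ) ''
        {Υ | Υ.map Prod.fst = μ ∧ Υ.map Prod.snd = ν}),
      ∀ c2 ∈ ((fun Υ : Measure (Z × Z) => ∫ q, dist q.1 q.2 ∂Υ) ''
        {Υ | Υ.map Prod.fst = ν ∧ Υ.map Prod.snd = ξ}), W1 μ ξ ≤ c1 + c2 := by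
    rintro _ ⟨Υ1, ⟨h11, h12⟩, rfl⟩ _ ⟨Υ2, ⟨h21, h22⟩, rfl⟩
    exact glue_le μ ν ξ h11 h12 h21 h22
  have h1 : ∀ c1 ∈ ((fun Υ : Measure (Z × Z) => ∫ q, dist q.1 q.2 ∂Υ) ''
        {Υ | Υ.map Prod.fst = μ ∧ Υ.map Prod.snd = ν}), W1 μ ξ - W1 ν ξ ≤ c1 := by
    intro c1 hc1
    have h2 : W1 μ ξ - c1 ≤ W1 ν ξ := by
      have h3 : ∀ c2 ∈ ((fun Υ : Measure (Z × Z) => ∫ q, dist q.1 q.2 ∂Υ) ''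
          {Υ | Υ.map Prod.fst = ν ∧ Υ.map Prod.snd = ξ}), W1 μ ξ - c1 ≤ c2 :=
        fun c2 hc2 => by have := key c1 hc1 c2 hc2; linarith
      exact le_csInf (hne ν ξ) h3
    linarith
  have : W1 μ ξ - W1 ν ξ ≤ W1 μ ν := le_csInf (hne μ ν) h1
  linarith


/-- snap function: first point in the list within distance `ε`, else the default point. -/
noncomputable def approxAux (z₀ : Z) (ε : ℝ) : List Z → Z → Z
  | [], _ => z₀
  | x :: xs, z => if dist z x < ε then x else approxAux z₀ ε xs z

lemma approxAux_measurable (z₀ : Z) (ε : ℝ) (l : List Z) : Measurable (approxAux z₀ ε l) := by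
  induction l with
  | nil => exact measurable_const
  | cons x xs ih =>
      show Measurable fun z => if dist z x < ε then x else approxAux z₀ ε xs z
      exact Measurable.ite (measurableSet_lt ((continuous_id.dist continuous_const).measurable)
        measurable_const) measurable_const ih

lemma approxAux_range (z₀ : Z) (ε : ℝ) (l : List Z) (z : Z) :
    approxAux z₀ ε l z ∈ insert z₀ {x | x ∈ l} := by
  induction l with
  | nil => simp [approxAux]
  | cons x xs ih =>
      show (if dist z x < ε then x else approxAux z₀ ε xs z) ∈ _
      split
      · simp
      · rcases ih with h | h
        · exact Or.inl h
        · exact Or.inr (List.mem_cons_of_mem _ h)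

lemma approxAux_dist (z₀ : Z) (ε : ℝ) (l : List Z) (z : Z) (h : ∃ x ∈ l, dist z x < ε) :
    dist z (approxAux z₀ ε l z) < ε := by
  induction l with
  | nil => simp at h
  | cons x xs ih =>
      show dist z (if dist z x < ε then x else approxAux z₀ ε xs z) < ε
      split_ifs with hx
      · exact hx
      · refine ih ?_
        rcases h with ⟨y, hy, hd⟩
        rcases List.mem_cons.1 hy with rfl | hy'
        · exact absurd hd hx
        · exact ⟨y, hy', hd⟩

lemma exists_approx [Nonempty Z] {ε : ℝ} (hε : 0 < ε) :
    ∃ f : Z → Z, Measurable f ∧ (Set.range f).Finite ∧ ∀ z, dist z (f z) ≤ ε := by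
  obtain ⟨s, hs⟩ := isCompact_univ.elim_finite_subcover (fun z : Z => Metric.ball z ε)
    (fun z => Metric.isOpen_ball) (fun z _ => mem_iUnion.2 ⟨z, Metric.mem_ball_self hε⟩)
  set z₀ := Classical.arbitrary Z
  refine ⟨approxAux z₀ ε s.toList, approxAux_measurable _ _ _, ?_, ?_⟩
  · refine Set.Finite.subset ?_ (range_subset_iff.2 (approxAux_range z₀ ε s.toList))
    exact Set.Finite.insert _ (s.toList.finite_toSet)
  · intro z
    have hz := hs (mem_univ z)
    simp only [mem_iUnion] at hz
    obtain ⟨x, hx, hdx⟩ := hz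
    refine le_of_lt (approxAux_dist z₀ ε s.toList z ⟨x, ?_, hdx⟩)
    · simpa [Finset.mem_toList] using hx
    
lemma W1_map_le (μ : Measure Z) [IsProbabilityMeasure μ] {f : Z → Z} (hf : Measurable f)
    {ε : ℝ} (hε : 0 ≤ ε) (hd : ∀ z, dist z (f z) ≤ ε) : W1 μ (μ.map f) ≤ ε := by
  have hm : Measurable fun z => (z, f z) := measurable_id.prodMk hf
  refine le_trans (W1_le (Υ := μ.map fun z => (z, f z)) ?_ ?_) ?_
  · rw [Measure.map_map measurable_fst hm]; exact Measure.map_id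
  · rw [Measure.map_map measurable_snd hm]
    have : (Prod.snd ∘ fun z => (z, f z)) = f := rfl
    rw [this]
  · rw [integral_map hm.aemeasurable contdist.aestronglyMeasurable]
    calc ∫ z, dist z (f z) ∂μ ≤ ∫ _, ε ∂μ := by
          refine integral_mono ?_ (integrable_const _) hd
          refine integrable_bdd μ ?_ (C := ε) (fun z => abs_le.2 ⟨by linarith [dist_nonneg (x := z) (y := f z)], hd z⟩)
          exact (contdist.measurable.comp hm).aestronglyMeasurable
      _ = ε := by simp

lemma map_eq_sum_dirac {f : Z → Z} (hf : Measurable f) {t : Finset Z} (hrange : ∀ z, f z ∈ t)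
    (μ : Measure Z) :
    μ.map f = ∑ x ∈ t, μ (f ⁻¹' {x}) • Measure.dirac x := by
  ext s hs
  rw [Measure.map_apply hf hs, Measure.finset_sum_apply]
  have hdecomp : f ⁻¹' s = ⋃ x ∈ t, f ⁻¹' ({x} ∩ s) := by
    ext z
    simp only [mem_preimage, mem_iUnion, mem_inter_iff, mem_singleton_iff]
    exact ⟨fun h => ⟨f z, hrange z, rfl, h⟩, fun ⟨x, _, hx, h⟩ => hx ▸ h⟩
  rw [hdecomp, measure_biUnion_finset ?_ (fun x _ => hf ((measurableSet_singleton x).inter hs))]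
  · refine Finset.sum_congr rfl fun x _ => ?_
    rw [Measure.smul_apply, Measure.dirac_apply' _ hs, smul_eq_mul]
    by_cases hxs : x ∈ s
    · have h1 : ({x} : Set Z) ∩ s = {x} := inter_eq_self_of_subset_left (singleton_subset_iff.2 hxs)
      rw [h1, Set.indicator_of_mem hxs]
      simp
    · have h1 : ({x} : Set Z) ∩ s = ∅ := singleton_inter_eq_empty.2 hxs
      rw [h1, Set.indicator_of_notMem hxs]
      simp
  · intro x _ y _ hxy
    refine Disjoint.preimage f ?_
    exact Set.disjoint_left.2 fun a ⟨ha1, _⟩ ⟨ha2, _⟩ => hxy (ha1.symm.trans ha2)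


lemma W1_sum_dirac_le {t : Finset Z} (a b : {x // x ∈ t} → ℝ≥0)
    (ha : ∑ x, a x = 1) (hb : ∑ x, b x = 1) :
    W1 (∑ x, (a x : ℝ≥0∞) • Measure.dirac (x : Z)) (∑ x, (b x : ℝ≥0∞) • Measure.dirac (x : Z))
      ≤ Metric.diam (univ : Set Z) * ∑ x, dist (a x) (b x) := by
  classical
  set D := Metric.diam (univ : Set Z) with hD
  have hD0 : 0 ≤ D := Metric.diam_nonneg
  set m : {x // x ∈ t} → ℝ≥0 := fun x => min (a x) (b x) with hm
  set p : {x // x ∈ t} → ℝ≥0 := fun x => a x - b x with hp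
  set q : {x // x ∈ t} → ℝ≥0 := fun x => b x - a x with hq
  have hmp : ∀ x, m x + p x = a x := fun x => by
    rcases le_total (a x) (b x) with h | h
    · simp [hm, hp, min_eq_left h, tsub_eq_zero_of_le h]
    · simp only [hm, hp, min_eq_right h]
      rw [add_tsub_cancel_of_le h]
  have hmq : ∀ x, m x + q x = b x := fun x => by
    rcases le_total (a x) (b x) with h | h
    · simp only [hm, hq, min_eq_left h]
      rw [add_tsub_cancel_of_le h]
    · simp [hm, hq, min_eq_right h, tsub_eq_zero_of_le h]
  have hsum_m : ∀ (c : {x // x ∈ t} → ℝ≥0), (∑ x, m x) + (∑ x, c x) = 1 →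
      ∑ x, c x = ∑ x, p x → True := fun _ _ _ => trivial
  have h1 : (∑ x, m x) + (∑ x, p x) = 1 := by
    rw [← Finset.sum_add_distrib]
    simp_rw [hmp]; exact ha
  have h2 : (∑ x, m x) + (∑ x, q x) = 1 := by
    rw [← Finset.sum_add_distrib]
    simp_rw [hmq]; exact hb
  have hspq : ∑ x, p x = ∑ x, q x := add_left_cancel (h1.trans h2.symm)
  set s : ℝ≥0 := ∑ x, p x with hsdef
  have hpd : ∀ x, (p x : ℝ) ≤ dist (a x) (b x) := fun x => by
    rw [NNReal.dist_eq]
    rcases le_total (a x) (b x) with h | h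
    · simp only [hp, tsub_eq_zero_of_le h, NNReal.coe_zero]
      exact abs_nonneg _
    · rw [hp]
      simp only
      rw [NNReal.coe_sub h]
      exact le_abs_self _
  have hsum_d : (s : ℝ) ≤ ∑ x, dist (a x) (b x) := by
    rw [hsdef, NNReal.coe_sum]
    exact Finset.sum_le_sum fun x _ => hpd x
  have hdist_nonneg : (0:ℝ) ≤ ∑ x, dist (a x) (b x) :=
    Finset.sum_nonneg fun x _ => dist_nonneg
  by_cases hs0 : s = 0
  · have hab : a = b := by
      funext x
      have hp0 : p x = 0 := Finset.sum_eq_zero_iff.1 hs0 x (Finset.mem_univ x)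
      have hq0 : q x = 0 := by
        have hq' : (∑ x, q x) = 0 := by rw [← hspq]; exact hs0
        exact Finset.sum_eq_zero_iff.1 hq' x (Finset.mem_univ x)
      calc a x = m x + p x := (hmp x).symm
        _ = m x := by rw [hp0, add_zero]
        _ = m x + q x := by rw [hq0, add_zero]
        _ = b x := hmq x
    rw [hab]
    exact le_trans (W1_self_le _) (by positivity)
  · set Mm : Measure Z := ∑ x, (m x : ℝ≥0∞) • Measure.dirac (x : Z) with hMm
    set P : Measure Z := ∑ x, (p x : ℝ≥0∞) • Measure.dirac (x : Z) with hP
    set N : Measure Z := ∑ x, (q x : ℝ≥0∞) • Measure.dirac (x : Z) with hN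
    have happly : ∀ (c : {x // x ∈ t} → ℝ≥0),
        (∑ x, (c x : ℝ≥0∞) • Measure.dirac (x : Z)) univ = ((∑ x, c x : ℝ≥0) : ℝ≥0∞) := by
      intro c
      rw [Measure.finset_sum_apply]
      push_cast
      simp
    have hPuniv : P univ = (s : ℝ≥0∞) := by rw [hP, happly, hsdef]
    have hNuniv : N univ = (s : ℝ≥0∞) := by rw [hN, happly, ← hspq]
    haveI : IsFiniteMeasure P := ⟨by rw [hPuniv]; exact ENNReal.coe_lt_top⟩
    haveI : IsFiniteMeasure N := ⟨by rw [hNuniv]; exact ENNReal.coe_lt_top⟩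
    haveI : IsFiniteMeasure Mm := ⟨by rw [hMm, happly]; exact ENNReal.coe_lt_top⟩
    set c : ℝ≥0∞ := ((s : ℝ≥0∞))⁻¹ with hc
    have hsne : (s : ℝ≥0∞) ≠ 0 := by exact_mod_cast hs0
    have hsnetop : (s : ℝ≥0∞) ≠ ⊤ := ENNReal.coe_ne_top
    have hdiag : Measurable fun z : Z => (z, z) := measurable_id.prodMk measurable_id
    set γ : Measure (Z × Z) := Mm.map (fun z => (z, z)) + c • (P.prod N) with hγ
    haveI : IsFiniteMeasure (c • P.prod N) := by
      constructor
      rw [Measure.smul_apply, smul_eq_mul]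
      exact ENNReal.mul_lt_top (by rw [hc]; exact ENNReal.inv_lt_top.2 (ENNReal.coe_pos.2 (pos_iff_ne_zero.2 hs0))) (measure_lt_top _ _)
    have hMmP : Mm + P = ∑ x, (a x : ℝ≥0∞) • Measure.dirac (x : Z) := by
      rw [hMm, hP, ← Finset.sum_add_distrib]
      refine Finset.sum_congr rfl fun x _ => ?_
      rw [← add_smul, ← ENNReal.coe_add, hmp]
    have hMmN : Mm + N = ∑ x, (b x : ℝ≥0∞) • Measure.dirac (x : Z) := by
      rw [hMm, hN, ← Finset.sum_add_distrib]
      refine Finset.sum_congr rfl fun x _ => ?_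
      rw [← add_smul, ← ENNReal.coe_add, hmq]
    have hγf : γ.map Prod.fst = ∑ x, (a x : ℝ≥0∞) • Measure.dirac (x : Z) := by
      rw [hγ, Measure.map_add _ _ measurable_fst, Measure.map_smul,
        Measure.map_map measurable_fst hdiag]
      have e1 : (Prod.fst ∘ fun z : Z => (z, z)) = id := rfl
      rw [e1, Measure.map_id, Measure.map_fst_prod, hNuniv, smul_smul,
        ENNReal.inv_mul_cancel hsne hsnetop, one_smul]
      exact hMmP
    have hγs : γ.map Prod.snd = ∑ x, (b x : ℝ≥0∞) • Measure.dirac (x : Z) := by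
      rw [hγ, Measure.map_add _ _ measurable_snd, Measure.map_smul,
        Measure.map_map measurable_snd hdiag]
      have e1 : (Prod.snd ∘ fun z : Z => (z, z)) = id := rfl
      rw [e1, Measure.map_id, Measure.map_snd_prod, hPuniv, smul_smul,
        ENNReal.inv_mul_cancel hsne hsnetop, one_smul]
      exact hMmN
    refine le_trans (W1_le hγf hγs) ?_
    rw [hγ, integral_add_measure (integrable_dist _) (integrable_dist _)]
    have hterm1 : ∫ x, dist x.1 x.2 ∂(Mm.map fun z => (z, z)) = 0 := by
      rw [integral_map hdiag.aemeasurable contdist.aestronglyMeasurable]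
      simp
    have hterm2 : ∫ x, dist x.1 x.2 ∂(c • P.prod N) ≤ D * s := by
      rw [integral_smul_measure]
      have hPN : ((P.prod N) univ).toReal = (s : ℝ) * (s : ℝ) := by
        rw [← Set.univ_prod_univ, Measure.prod_prod, hPuniv, hNuniv]
        simp
      have h2 := integral_dist_le (P.prod N)
      rw [hPN] at h2
      have hcr : c.toReal = ((s : ℝ))⁻¹ := by
        rw [hc, ENNReal.toReal_inv]
        simp
      rw [hcr, smul_eq_mul]
      have hsr : (0:ℝ) < (s:ℝ) := by
        have : s ≠ 0 := hs0
        positivity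
      have hint_nonneg : 0 ≤ ∫ q, dist q.1 q.2 ∂(P.prod N) :=
        integral_nonneg fun _ => dist_nonneg
      calc ((s:ℝ))⁻¹ * ∫ q, dist q.1 q.2 ∂(P.prod N)
          ≤ ((s:ℝ))⁻¹ * (D * ((s:ℝ) * (s:ℝ))) := by
            exact mul_le_mul_of_nonneg_left h2 (by positivity)
        _ = D * s := by field_simp
    calc ∫ x, dist x.1 x.2 ∂(Mm.map fun z => (z, z)) + ∫ x, dist x.1 x.2 ∂(c • P.prod N)
        ≤ 0 + D * s := by
          exact add_le_add (le_of_eq hterm1) hterm2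
      _ = D * s := by ring
      _ ≤ D * ∑ x, dist (a x) (b x) := mul_le_mul_of_nonneg_left hsum_d hD0


lemma sum_preimage_eq_one {f : Z → Z} (hf : Measurable f) {t : Finset Z} (hrange : ∀ z, f z ∈ t)
    (μ : Measure Z) [IsProbabilityMeasure μ] : ∑ x ∈ t, μ (f ⁻¹' {x}) = 1 := by
  have h1 := map_eq_sum_dirac hf hrange μ
  have h2 : (μ.map f) univ = 1 := by
    rw [Measure.map_apply hf MeasurableSet.univ, preimage_univ, measure_univ]
  rw [h1] at h2
  simpa [Measure.finset_sum_apply, Measure.smul_apply, smul_eq_mul] using h2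

lemma sum_dirac_coe {f : Z → Z} (hf : Measurable f) {t : Finset Z} (hrange : ∀ z, f z ∈ t)
    (μ : Measure Z) [IsProbabilityMeasure μ] :
    μ.map f = ∑ x : {x // x ∈ t}, ((μ (f ⁻¹' {(x : Z)})).toNNReal : ℝ≥0∞) •
      Measure.dirac (x : Z) := by
  rw [map_eq_sum_dirac hf hrange μ, ← Finset.sum_coe_sort t (fun x => μ (f ⁻¹' {x}) • Measure.dirac x)]
  refine Finset.sum_congr rfl fun x _ => ?_
  rw [ENNReal.coe_toNNReal (measure_ne_top μ _)]

lemma measurable_W1 [Nonempty Z] {α : Type*} [MeasurableSpace α] {ν₁ ν₂ : α → Measure Z}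
    (h1 : Measurable ν₁) (h2 : Measurable ν₂)
    (hp1 : ∀ a, IsProbabilityMeasure (ν₁ a)) (hp2 : ∀ a, IsProbabilityMeasure (ν₂ a)) :
    Measurable fun a => W1 (ν₁ a) (ν₂ a) := by
  classical
  have happrox : ∀ n : ℕ, ∃ f : Z → Z, Measurable f ∧ (Set.range f).Finite ∧
      ∀ z, dist z (f z) ≤ 1 / ((n : ℝ) + 1) := fun n => exists_approx (by positivity)
  choose f hfm hfr hfd using happrox
  set F : ℕ → α → ℝ := fun n a => W1 ((ν₁ a).map (f n)) ((ν₂ a).map (f n)) with hF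
  have hFmeas : ∀ n, Measurable (F n) := by
    intro n
    set t : Finset Z := (hfr n).toFinset with ht
    have hrange : ∀ z, f n z ∈ t := fun z => (Set.Finite.mem_toFinset _).2 (mem_range_self z)
    set D := Metric.diam (univ : Set Z) with hD
    have hD0 : 0 ≤ D := Metric.diam_nonneg
    set Φ : ({x // x ∈ t} → ℝ≥0) → Measure Z :=
      fun c => ∑ x, (c x : ℝ≥0∞) • Measure.dirac (x : Z) with hΦ
    have hΦprob : ∀ (c : {x // x ∈ t} → ℝ≥0), (∑ x, c x = 1) → IsProbabilityMeasure (Φ c) := by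
      intro c hsum
      constructor
      rw [hΦ]
      simp only [Measure.finset_sum_apply, Measure.smul_apply, measure_univ, smul_eq_mul, mul_one]
      rw [← ENNReal.coe_finset_sum, hsum, ENNReal.coe_one]
    set S : Set (({x // x ∈ t} → ℝ≥0) × ({x // x ∈ t} → ℝ≥0)) :=
      {pr | (∑ x, pr.1 x = 1) ∧ (∑ x, pr.2 x = 1)} with hS
    set G : S → ℝ := fun pr => W1 (Φ pr.val.1) (Φ pr.val.2) with hG
    have hkey : ∀ P Q : S, G Q - G P ≤
        D * ((∑ x, dist (Q.val.1 x) (P.val.1 x)) + ∑ x, dist (Q.val.2 x) (P.val.2 x)) := by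
      intro P Q
      haveI := hΦprob _ P.prop.1
      haveI := hΦprob _ P.prop.2
      haveI := hΦprob _ Q.prop.1
      haveI := hΦprob _ Q.prop.2
      have e1 : G Q ≤ W1 (Φ Q.val.1) (Φ P.val.1) + W1 (Φ P.val.1) (Φ P.val.2)
          + W1 (Φ P.val.2) (Φ Q.val.2) := by
        refine le_trans (W1_triangle _ (Φ P.val.1) _) ?_
        have := W1_triangle (Φ P.val.1) (Φ P.val.2) (Φ Q.val.2)
        linarith
      have e2 : W1 (Φ Q.val.1) (Φ P.val.1) ≤ D * ∑ x, dist (Q.val.1 x) (P.val.1 x) :=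
        W1_sum_dirac_le _ _ Q.prop.1 P.prop.1
      have e3 : W1 (Φ P.val.2) (Φ Q.val.2) ≤ D * ∑ x, dist (Q.val.2 x) (P.val.2 x) := by
        refine le_trans (W1_sum_dirac_le _ _ P.prop.2 Q.prop.2) ?_
        simp_rw [dist_comm]
        exact le_rfl
      have : G P = W1 (Φ P.val.1) (Φ P.val.2) := rfl
      rw [mul_add]
      linarith
    have hGcont : Continuous G := by
      rw [continuous_iff_continuousAt]
      intro P
      rw [ContinuousAt, tendsto_iff_dist_tendsto_zero]
      have hbd : ∀ Q : S, dist (G Q) (G P) ≤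
          D * ((∑ x, dist (Q.val.1 x) (P.val.1 x)) + ∑ x, dist (Q.val.2 x) (P.val.2 x)) := by
        intro Q
        rw [Real.dist_eq, abs_sub_le_iff]
        refine ⟨hkey P Q, ?_⟩
        refine le_trans (hkey Q P) ?_
        simp_rw [dist_comm]
        exact le_rfl
      refine squeeze_zero (fun Q => dist_nonneg) hbd ?_
      have hcont : Continuous fun Q : S =>
          D * ((∑ x, dist (Q.val.1 x) (P.val.1 x)) + ∑ x, dist (Q.val.2 x) (P.val.2 x)) := by
        refine continuous_const.mul (Continuous.add ?_ ?_)
        · exact continuous_finset_sum _ fun x _ =>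
            (((continuous_apply x).comp (continuous_fst.comp continuous_subtype_val)).dist
              continuous_const)
        · exact continuous_finset_sum _ fun x _ =>
            (((continuous_apply x).comp (continuous_snd.comp continuous_subtype_val)).dist
              continuous_const)
      have h0 : D * ((∑ x, dist (P.val.1 x) (P.val.1 x)) + ∑ x, dist (P.val.2 x) (P.val.2 x)) = 0 := by
        simp
      have := hcont.tendsto P
      rw [h0] at this
      exact this
    have hpre : ∀ x : {x // x ∈ t}, MeasurableSet ((f n) ⁻¹' {(x : Z)}) :=
      fun x => hfm n (measurableSet_singleton _)
    have hVsum : ∀ (ν : α → Measure Z), (∀ a, IsProbabilityMeasure (ν a)) → ∀ a,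
        ∑ x : {x // x ∈ t}, ((ν a) ((f n) ⁻¹' {(x : Z)})).toNNReal = 1 := by
      intro ν hν a
      haveI := hν a
      have hcoe : ((∑ x : {x // x ∈ t}, ((ν a) ((f n) ⁻¹' {(x : Z)})).toNNReal : ℝ≥0) : ℝ≥0∞) = 1 := by
        rw [ENNReal.coe_finset_sum]
        have : ∀ x : {x // x ∈ t}, (((ν a) ((f n) ⁻¹' {(x : Z)})).toNNReal : ℝ≥0∞)
            = (ν a) ((f n) ⁻¹' {(x : Z)}) := fun x => ENNReal.coe_toNNReal (measure_ne_top _ _)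
        simp_rw [this]
        rw [Finset.sum_coe_sort t (fun x => (ν a) ((f n) ⁻¹' {x}))]
        exact sum_preimage_eq_one (hfm n) hrange (ν a)
      exact_mod_cast hcoe
    set V : α → S := fun a => ⟨((fun x => ((ν₁ a) ((f n) ⁻¹' {(x : Z)})).toNNReal),
        (fun x => ((ν₂ a) ((f n) ⁻¹' {(x : Z)})).toNNReal)),
      ⟨hVsum ν₁ hp1 a, hVsum ν₂ hp2 a⟩⟩ with hV
    have hVmeas : Measurable V := by
      refine Measurable.subtype_mk (Measurable.prodMk ?_ ?_)
      · exact measurable_pi_lambda _ fun x =>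
          ENNReal.measurable_toNNReal.comp ((Measure.measurable_coe (hpre x)).comp h1)
      · exact measurable_pi_lambda _ fun x =>
          ENNReal.measurable_toNNReal.comp ((Measure.measurable_coe (hpre x)).comp h2)
    have hFeq : F n = G ∘ V := by
      funext a
      haveI := hp1 a
      haveI := hp2 a
      show W1 ((ν₁ a).map (f n)) ((ν₂ a).map (f n)) = _
      rw [sum_dirac_coe (hfm n) hrange (ν₁ a), sum_dirac_coe (hfm n) hrange (ν₂ a)]
      rfl
    rw [hFeq]
    exact hGcont.measurable.comp hVmeas
  have hconv : ∀ a, Filter.Tendsto (fun n => F n a) Filter.atTop (nhds (W1 (ν₁ a) (ν₂ a))) := by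
    intro a
    haveI := hp1 a
    haveI := hp2 a
    have hbound : ∀ n, |F n a - W1 (ν₁ a) (ν₂ a)| ≤ 2 * (1 / ((n : ℝ) + 1)) := by
      intro n
      haveI : IsProbabilityMeasure ((ν₁ a).map (f n)) :=
        Measure.isProbabilityMeasure_map (hfm n).aemeasurable
      haveI : IsProbabilityMeasure ((ν₂ a).map (f n)) :=
        Measure.isProbabilityMeasure_map (hfm n).aemeasurable
      have hεpos : (0:ℝ) ≤ 1 / ((n : ℝ) + 1) := by positivity
      have h1n : W1 (ν₁ a) ((ν₁ a).map (f n)) ≤ 1 / ((n : ℝ) + 1) :=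
        W1_map_le _ (hfm n) hεpos (hfd n)
      have h1n' : W1 ((ν₁ a).map (f n)) (ν₁ a) ≤ 1 / ((n : ℝ) + 1) := by
        rw [W1_comm]; exact h1n
      have h2n : W1 (ν₂ a) ((ν₂ a).map (f n)) ≤ 1 / ((n : ℝ) + 1) :=
        W1_map_le _ (hfm n) hεpos (hfd n)
      have h2n' : W1 ((ν₂ a).map (f n)) (ν₂ a) ≤ 1 / ((n : ℝ) + 1) := by
        rw [W1_comm]; exact h2n
      have t1 : F n a ≤ 1 / ((n : ℝ) + 1) + W1 (ν₁ a) (ν₂ a) + 1 / ((n : ℝ) + 1) := by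
        have u1 : F n a ≤ W1 ((ν₁ a).map (f n)) (ν₁ a) + W1 (ν₁ a) ((ν₂ a).map (f n)) :=
          W1_triangle _ _ _
        have u2 : W1 (ν₁ a) ((ν₂ a).map (f n)) ≤ W1 (ν₁ a) (ν₂ a) + W1 (ν₂ a) ((ν₂ a).map (f n)) :=
          W1_triangle _ _ _
        linarith
      have t2 : W1 (ν₁ a) (ν₂ a) ≤ 1 / ((n : ℝ) + 1) + F n a + 1 / ((n : ℝ) + 1) := by
        have u1 : W1 (ν₁ a) (ν₂ a) ≤ W1 (ν₁ a) ((ν₁ a).map (f n)) + W1 ((ν₁ a).map (f n)) (ν₂ a) :=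
          W1_triangle _ _ _
        have u2 : W1 ((ν₁ a).map (f n)) (ν₂ a) ≤ F n a + W1 ((ν₂ a).map (f n)) (ν₂ a) :=
          W1_triangle _ _ _
        linarith
      rw [abs_le]
      constructor <;> linarith
    rw [tendsto_iff_dist_tendsto_zero]
    refine squeeze_zero (g := fun n : ℕ => 2 * (1 / ((n : ℝ) + 1))) (fun n => dist_nonneg) (fun n => ?_) ?_
    · rw [Real.dist_eq]; exact hbound n
    · have h := tendsto_one_div_add_atTop_nhds_zero_nat.const_mul (2:ℝ)
      simpa using h
  exact measurable_of_tendsto_metrizable hFmeas (tendsto_pi_nhds.2 hconv)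


end Stmt12Aux

open Stmt12Aux

/-- triangle inequality for the conditional-Wasserstein cost, together with
the identification of `W̃(π², π³)` when `π²` and `π³` share the same first marginal. -/
theorem stmt12 {Z : Type*} [MetricSpace Z] [CompactSpace Z] [MeasurableSpace Z] [BorelSpace Z]
    (π1 π2 π3 : Measure (Z × Z))
    [IsProbabilityMeasure π1] [IsProbabilityMeasure π2] [IsProbabilityMeasure π3]
    (κ1 κ2 κ3 : Kernel Z Z)
    [IsMarkovKernel κ1] [IsMarkovKernel κ2] [IsMarkovKernel κ3]
    (hd1 : IsDisintegration π1 κ1) (hd2 : IsDisintegration π2 κ2)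
    (hd3 : IsDisintegration π3 κ3)
    (hmarg : π2.map Prod.fst = π3.map Prod.fst) :
    condCost π1 κ1 π3 κ3 ≤ condCost π1 κ1 π2 κ2 + condCost π2 κ2 π3 κ3 ∧
      condCost π2 κ2 π3 κ3 = ∫ z, W1 (κ2 z) (κ3 z) ∂(π2.map Prod.fst) := by
  classical
  haveI hNZ : Nonempty Z := by
    by_contra hne
    rw [not_nonempty_iff] at hne
    have h1 : (1 : ℝ≥0∞) = 0 := by
      rw [← measure_univ (μ := π1), Set.univ_eq_empty_iff.2 inferInstance, measure_empty]
    exact one_ne_zero h1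
  haveI : IsProbabilityMeasure (π1.map Prod.fst) :=
    Measure.isProbabilityMeasure_map measurable_fst.aemeasurable
  haveI : IsProbabilityMeasure (π2.map Prod.fst) :=
    Measure.isProbabilityMeasure_map measurable_fst.aemeasurable
  haveI : IsProbabilityMeasure (π3.map Prod.fst) :=
    Measure.isProbabilityMeasure_map measurable_fst.aemeasurable
  set D := Metric.diam (univ : Set Z) with hD
  have hD0 : 0 ≤ D := Metric.diam_nonneg
  -- measurability facts
  have hgmeas : Measurable fun q : Z × Z => W1 (κ1 q.1) (κ2 q.2) :=
    measurable_W1 (κ1.measurable.comp measurable_fst) (κ2.measurable.comp measurable_snd)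
      (fun q => inferInstance) (fun q => inferInstance)
  have hfmeas : Measurable fun q : Z × Z => W1 (κ1 q.1) (κ3 q.2) :=
    measurable_W1 (κ1.measurable.comp measurable_fst) (κ3.measurable.comp measurable_snd)
      (fun q => inferInstance) (fun q => inferInstance)
  have hhmeas : Measurable fun q : Z × Z => W1 (κ2 q.2) (κ3 q.2) :=
    measurable_W1 (κ2.measurable.comp measurable_snd) (κ3.measurable.comp measurable_snd)
      (fun q => inferInstance) (fun q => inferInstance)
  have hhzmeas : Measurable fun z : Z => W1 (κ2 z) (κ3 z) :=
    measurable_W1 κ2.measurable κ3.measurable (fun z => inferInstance) (fun z => inferInstance)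
  have hW1bdd : ∀ (κ κ' : Kernel Z Z) [IsMarkovKernel κ] [IsMarkovKernel κ'] (q : Z × Z),
      |W1 (κ q.1) (κ' q.2)| ≤ D := by
    intro κ κ' _ _ q
    rw [abs_of_nonneg (W1_nonneg _ _)]
    exact W1_le_diam _ _
  -- the diagonal coupling
  have hdiagm : Measurable fun z : Z => (z, z) := measurable_id.prodMk measurable_id
  have hdiage : MeasurableEmbedding fun z : Z => (z, z) :=
    hdiagm.measurableEmbedding fun u v h => congrArg Prod.fst h
  set υ0 : Measure (Z × Z) := (π2.map Prod.fst).map (fun z => (z, z)) with hυ0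
  have hυ0f : υ0.map Prod.fst = π2.map Prod.fst := by
    rw [hυ0, Measure.map_map measurable_fst hdiagm]
    exact Measure.map_id
  have hυ0s : υ0.map Prod.snd = π3.map Prod.fst := by
    rw [hυ0, Measure.map_map measurable_snd hdiagm, ← hmarg]
    exact Measure.map_id
  have hJυ0 : ∫ q, dist q.1 q.2 ∂υ0 = 0 := by
    rw [hυ0, integral_map hdiagm.aemeasurable contdist.aestronglyMeasurable]
    simp
  have hW230 : W1 (π2.map Prod.fst) (π3.map Prod.fst) = 0 := by
    rw [← hmarg]
    exact le_antisymm (W1_self_le _) (W1_nonneg _ _)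
  set c0 : ℝ := ∫ z, W1 (κ2 z) (κ3 z) ∂(π2.map Prod.fst) with hc0
  have hc0nonneg : 0 ≤ c0 := integral_nonneg fun z => W1_nonneg _ _
  set S23 : Set ℝ := {c | ∃ υ : Measure (Z × Z),
    υ.map Prod.fst = π2.map Prod.fst ∧ υ.map Prod.snd = π3.map Prod.fst ∧
    (∫ q, dist q.1 q.2 ∂υ) = W1 (π2.map Prod.fst) (π3.map Prod.fst) ∧
    c = ∫ q, W1 (κ2 q.1) (κ3 q.2) ∂υ} with hS23
  have e23 : condCost π2 κ2 π3 κ3 = sInf S23 := rfl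
  have hc0mem : c0 ∈ S23 := by
    refine ⟨υ0, hυ0f, hυ0s, by rw [hJυ0, hW230], ?_⟩
    rw [hυ0, hdiage.integral_map]
  have huniq : ∀ c ∈ S23, c = c0 := by
    rintro c ⟨υ, hf', hs', hw', rfl⟩
    haveI : IsProbabilityMeasure υ := prob_of_coupling hf'
    have hJ0 : ∫ q, dist q.1 q.2 ∂υ = 0 := by rw [hw', hW230]
    have hae : ∀ᵐ q ∂υ, (q : Z × Z).1 = q.2 := by
      have h0 : (fun q : Z × Z => dist q.1 q.2) =ᵐ[υ] 0 :=
        (integral_eq_zero_iff_of_nonneg (fun q => dist_nonneg) (integrable_dist υ)).1 hJ0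
      filter_upwards [h0] with q hq
      simpa [dist_eq_zero] using hq
    have hE : MeasurableSet {q : Z × Z | q.1 = q.2} :=
      (isClosed_eq continuous_fst continuous_snd).measurableSet
    have hEc : υ {q : Z × Z | ¬ q.1 = q.2} = 0 := ae_iff.1 hae
    have hsplit : ∀ (A : Set (Z × Z)), MeasurableSet A →
        υ A = υ (A ∩ {q : Z × Z | q.1 = q.2}) := by
      intro A hA
      rw [← measure_inter_add_diff A hE]
      have hnull : υ (A \ {q : Z × Z | q.1 = q.2}) = 0 :=
        measure_mono_null (fun q hq => hq.2) hEc
      rw [hnull, add_zero]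
    have hυeq : υ = υ0 := by
      refine measure_prod_ext fun s t hs'' ht'' => ?_
      have h1 : (s ×ˢ t) ∩ {q : Z × Z | q.1 = q.2}
          = (((s ∩ t) ×ˢ (univ : Set Z)) ∩ {q : Z × Z | q.1 = q.2}) := by
        ext ⟨u, v⟩
        simp only [mem_inter_iff, mem_prod, mem_setOf_eq, mem_univ, and_true]
        constructor
        · rintro ⟨⟨hu, hv⟩, he⟩; exact ⟨⟨hu, he ▸ hv⟩, he⟩
        · rintro ⟨⟨hu, hv⟩, he⟩; exact ⟨⟨hu, he ▸ hv⟩, he⟩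
      have h2 : υ (s ×ˢ t) = υ ((s ∩ t) ×ˢ (univ : Set Z)) := by
        rw [hsplit _ (hs''.prod ht''), h1, ← hsplit _ ((hs''.inter ht'').prod MeasurableSet.univ)]
      have h3 : υ ((s ∩ t) ×ˢ (univ : Set Z)) = (π2.map Prod.fst) (s ∩ t) := by
        rw [← hf', Measure.map_apply measurable_fst (hs''.inter ht'')]
        congr 1
        ext ⟨u, v⟩
        simp
      have h4 : υ0 (s ×ˢ t) = (π2.map Prod.fst) (s ∩ t) := by
        rw [hυ0, Measure.map_apply hdiagm (hs''.prod ht'')]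
        congr 1
      rw [h2, h3, h4]
    rw [hυeq, hυ0, hdiage.integral_map]
  have hpart2 : condCost π2 κ2 π3 κ3 = c0 := by
    rw [e23, Set.eq_singleton_iff_unique_mem.2 ⟨hc0mem, huniq⟩, csInf_singleton]
  refine ⟨?_, hpart2⟩
  -- part 1
  set S12 : Set ℝ := {c | ∃ υ : Measure (Z × Z),
    υ.map Prod.fst = π1.map Prod.fst ∧ υ.map Prod.snd = π2.map Prod.fst ∧
    (∫ q, dist q.1 q.2 ∂υ) = W1 (π1.map Prod.fst) (π2.map Prod.fst) ∧
    c = ∫ q, W1 (κ1 q.1) (κ2 q.2) ∂υ} with hS12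
  set S13 : Set ℝ := {c | ∃ υ : Measure (Z × Z),
    υ.map Prod.fst = π1.map Prod.fst ∧ υ.map Prod.snd = π3.map Prod.fst ∧
    (∫ q, dist q.1 q.2 ∂υ) = W1 (π1.map Prod.fst) (π3.map Prod.fst) ∧
    c = ∫ q, W1 (κ1 q.1) (κ3 q.2) ∂υ} with hS13
  have e12 : condCost π1 κ1 π2 κ2 = sInf S12 := rfl
  have e13 : condCost π1 κ1 π3 κ3 = sInf S13 := rfl
  rw [hpart2, e12, e13]
  rcases Set.eq_empty_or_nonempty S12 with hemp | hne
  · have hS13emp : S13 = ∅ := by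
      rw [Set.eq_empty_iff_forall_notMem]
      rintro c ⟨υ, hf', hs', hw', rfl⟩
      refine Set.eq_empty_iff_forall_notMem.1 hemp (∫ q, W1 (κ1 q.1) (κ2 q.2) ∂υ) ?_
      exact ⟨υ, hf', by rw [hmarg]; exact hs', by rw [hmarg]; exact hw', rfl⟩
    rw [hS13emp, hemp, Real.sInf_empty]
    linarith
  · have hstep : ∀ c ∈ S12, sInf S13 ≤ c + c0 := by
      rintro c ⟨υ, hf', hs', hw', rfl⟩
      haveI : IsProbabilityMeasure υ := prob_of_coupling hf'
      have hmem13 : (∫ q, W1 (κ1 q.1) (κ3 q.2) ∂υ) ∈ S13 :=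
        ⟨υ, hf', by rw [← hmarg]; exact hs', by rw [← hmarg]; exact hw', rfl⟩
      have hbdd13 : BddBelow S13 := by
        refine ⟨0, ?_⟩
        rintro x ⟨υ', -, -, -, rfl⟩
        exact integral_nonneg fun q => W1_nonneg _ _
      have hle1 : sInf S13 ≤ ∫ q, W1 (κ1 q.1) (κ3 q.2) ∂υ := csInf_le hbdd13 hmem13
      have hif : Integrable (fun q : Z × Z => W1 (κ1 q.1) (κ3 q.2)) υ :=
        integrable_bdd υ hfmeas.aestronglyMeasurable (hW1bdd κ1 κ3)
      have hig : Integrable (fun q : Z × Z => W1 (κ1 q.1) (κ2 q.2)) υ :=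
        integrable_bdd υ hgmeas.aestronglyMeasurable (hW1bdd κ1 κ2)
      have hih : Integrable (fun q : Z × Z => W1 (κ2 q.2) (κ3 q.2)) υ := by
        refine integrable_bdd υ hhmeas.aestronglyMeasurable (C := D) (fun q => ?_)
        rw [abs_of_nonneg (W1_nonneg _ _)]
        exact W1_le_diam _ _
      have htri : ∀ q : Z × Z, W1 (κ1 q.1) (κ3 q.2) ≤
          W1 (κ1 q.1) (κ2 q.2) + W1 (κ2 q.2) (κ3 q.2) := fun q => W1_triangle _ _ _
      have h5 : ∫ q, W1 (κ1 q.1) (κ3 q.2) ∂υ ≤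
          (∫ q, W1 (κ1 q.1) (κ2 q.2) ∂υ) + ∫ q, W1 (κ2 q.2) (κ3 q.2) ∂υ := by
        refine le_trans (integral_mono hif (hig.add hih) htri) ?_
        exact le_of_eq (integral_add hig hih)
      have h6 : ∫ q, W1 (κ2 q.2) (κ3 q.2) ∂υ = c0 := by
        have := integral_map (μ := υ) measurable_snd.aemeasurable
          (f := fun z : Z => W1 (κ2 z) (κ3 z))
          (by rw [hs']; exact hhzmeas.aestronglyMeasurable)
        rw [hs'] at this
        rw [← this]
      linarith
    have h4 : sInf S13 - c0 ≤ sInf S12 :=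
      le_csInf hne fun c hc => by have := hstep c hc; linarith
    linarith
end

section
/- (Stagnating transport plans preserve conditional distributions.) Let A ⊆ ℝᵈ and B ⊆ ℝ^{d′} be bounded Borel sets, μ ∈ P(A), and let u ↦ μ_u ∈ P(B) be a measurable family of probability measures. Suppose {Υ_n} ⊆ Γ(μ, μ) is a sequence of self-couplings of μ with ∫_{A×A} |u − u′| dΥ_n(u, u′) → 0. Then ∫_{A×A} W₁(μ_u, μ_{u′}) dΥ_n(u, u′) → 0 as n → ∞. -/
open MeasureTheory ProbabilityTheory
open ENNReal Filter

lemma W1_nonneg {X : Type*} [MeasurableSpace X] [PseudoMetricSpace X]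
    (μ ν : Measure X) : 0 ≤ W1 μ ν :=
  Real.sInf_nonneg (by rintro x ⟨G, -, rfl⟩; exact integral_nonneg fun q => dist_nonneg)

lemma W1_le_lintegral_cost {X : Type*} [MeasurableSpace X] [PseudoMetricSpace X]
    [SecondCountableTopology X] [OpensMeasurableSpace X] {ν ν' : Measure X}
    (Γ : Measure (X × X)) (h1 : Γ.map Prod.fst = ν) (h2 : Γ.map Prod.snd = ν') :
    W1 ν ν' ≤ (∫⁻ q, ENNReal.ofReal (dist q.1 q.2) ∂Γ).toReal := by
  have hmem : (∫ q, dist q.1 q.2 ∂Γ) ∈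
      ((fun Υ : Measure (X × X) => ∫ q, dist q.1 q.2 ∂Υ) ''
        {Υ | Υ.map Prod.fst = ν ∧ Υ.map Prod.snd = ν'}) := ⟨Γ, ⟨h1, h2⟩, rfl⟩
  have hbdd : BddBelow ((fun Υ : Measure (X × X) => ∫ q, dist q.1 q.2 ∂Υ) ''
      {Υ | Υ.map Prod.fst = ν ∧ Υ.map Prod.snd = ν'}) :=
    ⟨0, by rintro x ⟨G, -, rfl⟩; exact integral_nonneg fun q => dist_nonneg⟩
  have h := csInf_le hbdd hmem
  rwa [integral_eq_lintegral_of_nonneg_ae (Filter.Eventually.of_forall fun q => dist_nonneg)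
    ((continuous_fst.dist continuous_snd).aestronglyMeasurable)] at h



lemma sum_restrict_apply {X : Type*} [MeasurableSpace X] (ν : Measure X) (m : ℕ)
    (Bs : ℕ → Set X) (hBmeas : ∀ i, MeasurableSet (Bs i))
    (hdisj : Pairwise (Function.onFun Disjoint Bs))
    (hν : ν (⋃ i ∈ Finset.range m, Bs i)ᶜ = 0)
    {t : Set X} (ht : MeasurableSet t) :
    ∑ i ∈ Finset.range m, ν.restrict (Bs i) t = ν t := by
  have h1 : ∀ i ∈ Finset.range m, ν.restrict (Bs i) t = ν (t ∩ Bs i) := fun i _ =>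
    Measure.restrict_apply ht
  rw [Finset.sum_congr rfl h1]
  have hd : (↑(Finset.range m) : Set ℕ).PairwiseDisjoint fun i => t ∩ Bs i := by
    intro i _ j _ hij
    exact Set.disjoint_of_subset Set.inter_subset_right Set.inter_subset_right (hdisj hij)
  rw [← measure_biUnion_finset hd (fun i _ => ht.inter (hBmeas i)), ← Set.inter_iUnion₂]
  have hU : MeasurableSet (⋃ i ∈ Finset.range m, Bs i) :=
    MeasurableSet.biUnion (Finset.range m).countable_toSet fun i _ => hBmeas i
  refine le_antisymm (measure_mono Set.inter_subset_left) ?_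
  have h2 := measure_inter_add_diff (μ := ν) t hU
  have hle : ν (t \ (⋃ i ∈ Finset.range m, Bs i)) = 0 :=
    measure_mono_null (Set.diff_subset_compl _ _) hν
  rw [← h2, hle, add_zero]

private lemma key_coeff {a b S v : ℝ≥0∞} (ha1 : a ≤ 1) (hb1 : b ≤ 1) (hS1 : S ≤ 1)
    (hra : a - min a b ≤ S) (hv : v ≤ a) :
    min a b / (a * b) * (v * b) + S⁻¹ * ((a - min a b) / a * v * S) = v := by
  have ha' : a ≠ ∞ := (lt_of_le_of_lt ha1 one_lt_top).ne
  have hb' : b ≠ ∞ := (lt_of_le_of_lt hb1 one_lt_top).ne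
  have hS' : S ≠ ∞ := (lt_of_le_of_lt hS1 one_lt_top).ne
  rcases eq_or_ne a 0 with ha0 | ha0
  · have hv0 : v = 0 := le_antisymm (ha0 ▸ hv) zero_le
    simp [hv0]
  rcases eq_or_ne b 0 with hb0 | hb0
  · have hS0 : S ≠ 0 := fun h => ha0 (by simpa [hb0, h] using hra)
    simp only [hb0, min_zero, ENNReal.zero_div, zero_mul, mul_zero, tsub_zero, zero_add]
    rw [ENNReal.div_self ha0 ha', one_mul, mul_comm v S, ← mul_assoc,
      ENNReal.inv_mul_cancel hS0 hS', one_mul]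
  · have hfirst : min a b / (a * b) * (v * b) = min a b / a * v := by
      rw [div_eq_mul_inv, div_eq_mul_inv, ENNReal.mul_inv (Or.inl ha0) (Or.inl ha')]
      calc min a b * (a⁻¹ * b⁻¹) * (v * b) = min a b * a⁻¹ * v * (b⁻¹ * b) := by ring
        _ = min a b * a⁻¹ * v := by rw [ENNReal.inv_mul_cancel hb0 hb', mul_one]
    rw [hfirst]
    rcases eq_or_ne S 0 with hS0 | hS0
    · have hac : a - min a b = 0 := le_antisymm (hS0 ▸ hra) zero_le
      have hmin : min a b = a := le_antisymm (min_le_left _ _) (tsub_eq_zero_iff_le.mp hac)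
      simp [hac, hmin, ENNReal.div_self ha0 ha']
    · have h2 : S⁻¹ * ((a - min a b) / a * v * S) = (a - min a b) / a * v := by
        rw [mul_comm ((a - min a b) / a * v) S, ← mul_assoc, ENNReal.inv_mul_cancel hS0 hS',
          one_mul]
      rw [h2, ← add_mul, ENNReal.div_add_div_same, add_tsub_cancel_of_le (min_le_left a b),
        ENNReal.div_self ha0 ha', one_mul]

private lemma key_coeff' {a b S v : ℝ≥0∞} (ha1 : a ≤ 1) (hb1 : b ≤ 1) (hS1 : S ≤ 1)
    (hrb : b - min a b ≤ S) (hv : v ≤ b) :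
    min a b / (a * b) * (a * v) + S⁻¹ * (S * ((b - min a b) / b * v)) = v := by
  have h := key_coeff hb1 ha1 hS1 (by rwa [min_comm]) hv
  rw [min_comm, mul_comm b a, mul_comm v a, mul_comm ((b - min a b) / b * v) S] at h
  exact h


section C
variable {X : Type*} [MeasurableSpace X] [PseudoMetricSpace X]
  [SecondCountableTopology X] [OpensMeasurableSpace X]

lemma W1_le_partition (ν ν' : Measure X) [IsProbabilityMeasure ν] [IsProbabilityMeasure ν']
    (m : ℕ) (Bs : ℕ → Set X)
    (hBmeas : ∀ i, MeasurableSet (Bs i))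
    (hdisj : Pairwise (Function.onFun Disjoint Bs))
    {ε D : ℝ} (hε : 0 ≤ ε) (hD : 0 ≤ D)
    (hsmall : ∀ i, ∀ x ∈ Bs i, ∀ y ∈ Bs i, dist x y ≤ ε)
    (hbig : ∀ x ∈ ⋃ i ∈ Finset.range m, Bs i, ∀ y ∈ ⋃ i ∈ Finset.range m, Bs i, dist x y ≤ D)
    (hν : ν (⋃ i ∈ Finset.range m, Bs i)ᶜ = 0) (hν' : ν' (⋃ i ∈ Finset.range m, Bs i)ᶜ = 0) :
    W1 ν ν' ≤ ε + D * ∑ i ∈ Finset.range m, |(ν (Bs i)).toReal - (ν' (Bs i)).toReal| := by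
  classical
  set U : Set X := ⋃ i ∈ Finset.range m, Bs i with hUdef
  have hU : MeasurableSet U :=
    MeasurableSet.biUnion (Finset.range m).countable_toSet fun i _ => hBmeas i
  set a : ℕ → ℝ≥0∞ := fun i => ν (Bs i) with ha_def
  set b : ℕ → ℝ≥0∞ := fun i => ν' (Bs i) with hb_def
  set c : ℕ → ℝ≥0∞ := fun i => min (a i) (b i) with hc_def
  set S : ℝ≥0∞ := ∑ i ∈ Finset.range m, (a i - c i) with hS_def
  -- basic facts
  have ha1 : ∀ i, a i ≤ 1 := fun i => prob_le_one
  have hb1 : ∀ i, b i ≤ 1 := fun i => prob_le_one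
  have hνU : ν U = 1 := by
    have h := measure_add_measure_compl (μ := ν) hU
    rw [hν, add_zero, measure_univ] at h; exact h
  have hν'U : ν' U = 1 := by
    have h := measure_add_measure_compl (μ := ν') hU
    rw [hν', add_zero, measure_univ] at h; exact h
  have hsum_a : ∑ i ∈ Finset.range m, a i = 1 := by
    rw [← hνU, hUdef, measure_biUnion_finset ?_ (fun i _ => hBmeas i)]
    intro i _ j _ hij; exact hdisj hij
  have hsum_b : ∑ i ∈ Finset.range m, b i = 1 := by
    rw [← hν'U, hUdef, measure_biUnion_finset ?_ (fun i _ => hBmeas i)]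
    intro i _ j _ hij; exact hdisj hij
  have hsumc_ne : ∑ i ∈ Finset.range m, c i ≠ ∞ := by
    refine (lt_of_le_of_lt ?_ one_lt_top).ne
    rw [← hsum_a]; exact Finset.sum_le_sum fun i _ => min_le_left _ _
  have hS_eq : S = 1 - ∑ i ∈ Finset.range m, c i := by
    refine ENNReal.eq_sub_of_add_eq hsumc_ne ?_
    rw [hS_def, ← Finset.sum_add_distrib, ← hsum_a]
    exact Finset.sum_congr rfl fun i _ => tsub_add_cancel_of_le (min_le_left _ _)
  have hS_eq' : ∑ i ∈ Finset.range m, (b i - c i) = S := by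
    rw [hS_eq]
    refine ENNReal.eq_sub_of_add_eq hsumc_ne ?_
    rw [← Finset.sum_add_distrib, ← hsum_b]
    exact Finset.sum_congr rfl fun i _ => tsub_add_cancel_of_le (min_le_right _ _)
  have hS1 : S ≤ 1 := by rw [hS_eq]; exact tsub_le_self
  have hS_ne : S ≠ ∞ := (lt_of_le_of_lt hS1 one_lt_top).ne
  have hra : ∀ i ∈ Finset.range m, a i - c i ≤ S := by
    intro i hi
    exact Finset.single_le_sum (f := fun j => a j - c j) (fun j _ => zero_le) hi
  have hrb : ∀ i ∈ Finset.range m, b i - c i ≤ S := by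
    intro i hi; rw [← hS_eq']
    exact Finset.single_le_sum (f := fun j => b j - c j) (fun j _ => zero_le) hi
  -- helper for div-mul cancellation
  have hdm : ∀ x y : ℝ≥0∞, x ≤ y → y ≠ ∞ → x / y * y = x := by
    intro x y hxy hy
    rcases eq_or_ne y 0 with h | h
    · have hx : x = 0 := le_antisymm (h ▸ hxy) zero_le
      simp [hx]
    · exact ENNReal.div_mul_cancel h hy
  set νi : ℕ → Measure X := fun i => ν.restrict (Bs i) with hνi_def
  set ν'i : ℕ → Measure X := fun i => ν'.restrict (Bs i) with hν'i_def
  set ρ : Measure X := ∑ i ∈ Finset.range m, ((a i - c i) / a i) • νi i with hρ_def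
  set ρ' : Measure X := ∑ i ∈ Finset.range m, ((b i - c i) / b i) • ν'i i with hρ'_def
  set Γ : Measure (X × X) :=
    (∑ i ∈ Finset.range m, (c i / (a i * b i)) • ((νi i).prod (ν'i i)))
      + S⁻¹ • (ρ.prod ρ') with hΓ_def
  have hρ'univ : ρ' Set.univ = S := by
    rw [hρ'_def, Measure.finset_sum_apply, ← hS_eq']
    refine Finset.sum_congr rfl fun i _ => ?_
    rw [Measure.smul_apply, smul_eq_mul, hν'i_def, Measure.restrict_apply_univ]
    exact hdm _ _ tsub_le_self ((lt_of_le_of_lt (hb1 i) one_lt_top).ne)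
  have hρuniv : ρ Set.univ = S := by
    rw [hρ_def, Measure.finset_sum_apply, hS_def]
    refine Finset.sum_congr rfl fun i _ => ?_
    rw [Measure.smul_apply, smul_eq_mul, hνi_def, Measure.restrict_apply_univ]
    exact hdm _ _ tsub_le_self ((lt_of_le_of_lt (ha1 i) one_lt_top).ne)
  haveI : IsFiniteMeasure ρ := ⟨by rw [hρuniv]; exact lt_of_le_of_lt hS1 one_lt_top⟩
  haveI : IsFiniteMeasure ρ' := ⟨by rw [hρ'univ]; exact lt_of_le_of_lt hS1 one_lt_top⟩
  have hfst : Γ.map Prod.fst = ν := by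
    ext t ht
    rw [Measure.map_apply measurable_fst ht, ← Set.prod_univ, hΓ_def, Measure.add_apply,
      Measure.smul_apply, smul_eq_mul, Measure.finset_sum_apply]
    have hprod : ∀ i ∈ Finset.range m,
        ((c i / (a i * b i)) • ((νi i).prod (ν'i i))) (t ×ˢ Set.univ)
          = c i / (a i * b i) * (νi i t * b i) := by
      intro i _
      rw [Measure.smul_apply, smul_eq_mul, Measure.prod_prod, hν'i_def,
        Measure.restrict_apply_univ]
    rw [Finset.sum_congr rfl hprod, Measure.prod_prod, hρ'univ]
    have hρt : ρ t = ∑ i ∈ Finset.range m, (a i - c i) / a i * νi i t := by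
      rw [hρ_def, Measure.finset_sum_apply]
      exact Finset.sum_congr rfl fun i _ => rfl
    rw [hρt, Finset.sum_mul, Finset.mul_sum, ← Finset.sum_add_distrib,
      ← sum_restrict_apply ν m Bs hBmeas hdisj hν ht]
    refine Finset.sum_congr rfl fun i hi => ?_
    have hv : νi i t ≤ a i := by
      rw [hνi_def]
      calc ν.restrict (Bs i) t ≤ ν.restrict (Bs i) Set.univ := measure_mono (Set.subset_univ t)
        _ = a i := Measure.restrict_apply_univ _
    exact key_coeff (ha1 i) (hb1 i) hS1 (hra i hi) hv
  have hsnd : Γ.map Prod.snd = ν' := by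
    ext t ht
    rw [Measure.map_apply measurable_snd ht, ← Set.univ_prod, hΓ_def, Measure.add_apply,
      Measure.smul_apply, smul_eq_mul, Measure.finset_sum_apply]
    have hprod : ∀ i ∈ Finset.range m,
        ((c i / (a i * b i)) • ((νi i).prod (ν'i i))) (Set.univ ×ˢ t)
          = c i / (a i * b i) * (a i * ν'i i t) := by
      intro i _
      rw [Measure.smul_apply, smul_eq_mul, Measure.prod_prod, hνi_def,
        Measure.restrict_apply_univ]
    rw [Finset.sum_congr rfl hprod, Measure.prod_prod, hρuniv]
    have hρ't : ρ' t = ∑ i ∈ Finset.range m, (b i - c i) / b i * ν'i i t := by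
      rw [hρ'_def, Measure.finset_sum_apply]
      exact Finset.sum_congr rfl fun i _ => rfl
    rw [hρ't, Finset.mul_sum, Finset.mul_sum, ← Finset.sum_add_distrib,
      ← sum_restrict_apply ν' m Bs hBmeas hdisj hν' ht]
    refine Finset.sum_congr rfl fun i hi => ?_
    have hv : ν'i i t ≤ b i := by
      rw [hν'i_def]
      calc ν'.restrict (Bs i) t ≤ ν'.restrict (Bs i) Set.univ := measure_mono (Set.subset_univ t)
        _ = b i := Measure.restrict_apply_univ _
    exact key_coeff' (ha1 i) (hb1 i) hS1 (hrb i hi) hv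
  -- cost bound
  have hcost : ∫⁻ q, ENNReal.ofReal (dist q.1 q.2) ∂Γ
      ≤ ENNReal.ofReal ε + ENNReal.ofReal D * S := by
    rw [hΓ_def, lintegral_add_measure, lintegral_smul_measure,
      lintegral_finset_sum_measure]
    have hdiag : ∀ i ∈ Finset.range m,
        ∫⁻ q, ENNReal.ofReal (dist q.1 q.2)
            ∂((c i / (a i * b i)) • ((νi i).prod (ν'i i)))
          ≤ ENNReal.ofReal ε * a i := by
      intro i _
      rw [lintegral_smul_measure]
      have h1 : ∫⁻ q, ENNReal.ofReal (dist q.1 q.2) ∂((νi i).prod (ν'i i))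
          ≤ ENNReal.ofReal ε * (a i * b i) := by
        rw [hνi_def, hν'i_def, Measure.prod_restrict]
        calc ∫⁻ q in Bs i ×ˢ Bs i, ENNReal.ofReal (dist q.1 q.2) ∂(ν.prod ν')
            ≤ ∫⁻ _ in Bs i ×ˢ Bs i, ENNReal.ofReal ε ∂(ν.prod ν') := by
              refine setLIntegral_mono measurable_const fun q hq => ?_
              exact ENNReal.ofReal_le_ofReal (hsmall i q.1 hq.1 q.2 hq.2)
          _ = ENNReal.ofReal ε * (ν.prod ν') (Bs i ×ˢ Bs i) := setLIntegral_const _ _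
          _ = ENNReal.ofReal ε * (a i * b i) := by rw [Measure.prod_prod]
      calc c i / (a i * b i) * ∫⁻ q, ENNReal.ofReal (dist q.1 q.2) ∂((νi i).prod (ν'i i))
          ≤ c i / (a i * b i) * (ENNReal.ofReal ε * (a i * b i)) := mul_le_mul_right h1 _
        _ = ENNReal.ofReal ε * ((a i * b i) * (c i / (a i * b i))) := by ring
        _ ≤ ENNReal.ofReal ε * c i := mul_le_mul_right ENNReal.mul_div_le _
        _ ≤ ENNReal.ofReal ε * a i := mul_le_mul_right (min_le_left _ _) _
    have hρUc : ρ Uᶜ = 0 := by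
      rw [hρ_def, Measure.finset_sum_apply]
      refine Finset.sum_eq_zero fun i _ => ?_
      rw [Measure.smul_apply, smul_eq_mul, hνi_def, Measure.restrict_apply hU.compl,
        measure_mono_null Set.inter_subset_left hν, mul_zero]
    have hρ'Uc : ρ' Uᶜ = 0 := by
      rw [hρ'_def, Measure.finset_sum_apply]
      refine Finset.sum_eq_zero fun i _ => ?_
      rw [Measure.smul_apply, smul_eq_mul, hν'i_def, Measure.restrict_apply hU.compl,
        measure_mono_null Set.inter_subset_left hν', mul_zero]
    have hoff : ∫⁻ q, ENNReal.ofReal (dist q.1 q.2) ∂(ρ.prod ρ')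
        ≤ ENNReal.ofReal D * (S * S) := by
      have hr : ρ.restrict U = ρ :=
        Measure.restrict_eq_self_of_ae_mem (mem_ae_iff.mpr hρUc)
      have hr' : ρ'.restrict U = ρ' :=
        Measure.restrict_eq_self_of_ae_mem (mem_ae_iff.mpr hρ'Uc)
      rw [← hr, ← hr', Measure.prod_restrict]
      calc ∫⁻ q in U ×ˢ U, ENNReal.ofReal (dist q.1 q.2) ∂(ρ.prod ρ')
          ≤ ∫⁻ _ in U ×ˢ U, ENNReal.ofReal D ∂(ρ.prod ρ') := by
            refine setLIntegral_mono measurable_const fun q hq => ?_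
            exact ENNReal.ofReal_le_ofReal (hbig q.1 hq.1 q.2 hq.2)
        _ = ENNReal.ofReal D * (ρ.prod ρ') (U ×ˢ U) := setLIntegral_const _ _
        _ ≤ ENNReal.ofReal D * (S * S) := by
            refine mul_le_mul_right ?_ _
            rw [Measure.prod_prod]
            exact mul_le_mul' (le_of_le_of_eq (measure_mono (Set.subset_univ _)) hρuniv)
              (le_of_le_of_eq (measure_mono (Set.subset_univ _)) hρ'univ)
    calc (∑ i ∈ Finset.range m, ∫⁻ q, ENNReal.ofReal (dist q.1 q.2)
            ∂((c i / (a i * b i)) • ((νi i).prod (ν'i i))))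
          + S⁻¹ * ∫⁻ q, ENNReal.ofReal (dist q.1 q.2) ∂(ρ.prod ρ')
        ≤ (∑ i ∈ Finset.range m, ENNReal.ofReal ε * a i)
            + S⁻¹ * (ENNReal.ofReal D * (S * S)) :=
          add_le_add (Finset.sum_le_sum hdiag) (mul_le_mul_right hoff _)
      _ = ENNReal.ofReal ε * ∑ i ∈ Finset.range m, a i
            + ENNReal.ofReal D * (S * (S⁻¹ * S)) := by
          rw [← Finset.mul_sum]; ring_nf
      _ ≤ ENNReal.ofReal ε * 1 + ENNReal.ofReal D * (S * 1) := by
          refine add_le_add (mul_le_mul_right hsum_a.le _) (mul_le_mul_right ?_ _)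
          exact mul_le_mul_right (ENNReal.inv_mul_le_one S) _
      _ = ENNReal.ofReal ε + ENNReal.ofReal D * S := by rw [mul_one, mul_one]
  -- conclude
  have hW := W1_le_lintegral_cost Γ hfst hsnd
  have hfin : ENNReal.ofReal ε + ENNReal.ofReal D * S ≠ ∞ :=
    (ENNReal.add_lt_top.mpr ⟨ofReal_lt_top,
      (ENNReal.mul_lt_top ofReal_lt_top (lt_of_le_of_lt hS1 one_lt_top))⟩).ne
  have h2 : (∫⁻ q, ENNReal.ofReal (dist q.1 q.2) ∂Γ).toReal
      ≤ ε + D * S.toReal := by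
    refine le_trans (ENNReal.toReal_mono hfin hcost) (le_of_eq ?_)
    rw [ENNReal.toReal_add ofReal_ne_top
      (ENNReal.mul_lt_top ofReal_lt_top (lt_of_le_of_lt hS1 one_lt_top)).ne,
      ENNReal.toReal_mul, ENNReal.toReal_ofReal hε, ENNReal.toReal_ofReal hD]
  refine le_trans (le_trans hW h2) ?_
  have hSle : S.toReal ≤ ∑ i ∈ Finset.range m, |(ν (Bs i)).toReal - (ν' (Bs i)).toReal| := by
    rw [hS_def, ENNReal.toReal_sum (fun i _ => ?fin)]
    case fin =>
      exact (lt_of_le_of_lt (le_trans tsub_le_self (ha1 i)) one_lt_top).ne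
    refine Finset.sum_le_sum fun i _ => ?_
    have hane : a i ≠ ∞ := (lt_of_le_of_lt (ha1 i) one_lt_top).ne
    have hbne : b i ≠ ∞ := (lt_of_le_of_lt (hb1 i) one_lt_top).ne
    rcases le_total (b i) (a i) with hab | hab
    · have hc : c i = b i := min_eq_right hab
      rw [hc, ENNReal.toReal_sub_of_le hab hane]
      exact le_abs_self _
    · have hc : c i = a i := min_eq_left hab
      rw [hc, tsub_self]
      simpa using abs_nonneg ((ν (Bs i)).toReal - (ν' (Bs i)).toReal)
  exact add_le_add le_rfl (mul_le_mul_of_nonneg_left hSle hD)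


end C


lemma exists_partition {X : Type*} [MeasurableSpace X] [PseudoMetricSpace X] [ProperSpace X]
    [OpensMeasurableSpace X] [Inhabited X]
    (B : Set X) (hB : Bornology.IsBounded B) {ε : ℝ} (hε : 0 < ε) :
    ∃ (m : ℕ) (Bs : ℕ → Set X) (D : ℝ), (∀ i, MeasurableSet (Bs i)) ∧
      Pairwise (Function.onFun Disjoint Bs) ∧ 0 ≤ D ∧
      (∀ i, ∀ x ∈ Bs i, ∀ y ∈ Bs i, dist x y ≤ ε) ∧
      (∀ x ∈ ⋃ i ∈ Finset.range m, Bs i, ∀ y ∈ ⋃ i ∈ Finset.range m, Bs i, dist x y ≤ D) ∧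
      B ⊆ ⋃ i ∈ Finset.range m, Bs i := by
  classical
  obtain ⟨t, -, tfin, hcover⟩ :=
    hB.isCompact_closure.finite_cover_balls (e := ε / 2) (half_pos hε)
  set l : List X := tfin.toFinset.toList with hl_def
  set m : ℕ := l.length with hm_def
  set f : ℕ → X := fun i => l.getD i default with hf_def
  set g : ℕ → Set X := fun i => if i < m then Metric.ball (f i) (ε / 2) else ∅ with hg_def
  have hg_meas : ∀ i, MeasurableSet (g i) := by
    intro i
    simp only [hg_def]
    by_cases h : i < m
    · rw [if_pos h]; exact Metric.isOpen_ball.measurableSet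
    · rw [if_neg h]; exact MeasurableSet.empty
  have hg_ball : ∀ i, g i ⊆ Metric.ball (f i) (ε / 2) := by
    intro i x hx
    simp only [hg_def] at hx
    by_cases h : i < m
    · rwa [if_pos h] at hx
    · rw [if_neg h] at hx; exact absurd hx (Set.notMem_empty x)
  have hbound : Bornology.IsBounded (⋃ i ∈ Finset.range m, g i) :=
    (Bornology.isBounded_biUnion (Finset.range m).finite_toSet).mpr fun i _ =>
      Metric.isBounded_ball.subset (hg_ball i)
  obtain ⟨C, hC⟩ := Metric.isBounded_iff.mp hbound
  have hsub : ∀ i, disjointed g i ⊆ g i := disjointed_subset g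
  have hUU : ⋃ i ∈ Finset.range m, disjointed g i = ⋃ i ∈ Finset.range m, g i := by
    have h1 : ⋃ i ∈ Finset.range m, disjointed g i = ⋃ i, disjointed g i := by
      refine le_antisymm (Set.iUnion₂_subset fun i _ => Set.subset_iUnion _ i) ?_
      refine Set.iUnion_subset fun i => ?_
      by_cases h : i < m
      · exact Set.subset_biUnion_of_mem (Finset.mem_range.mpr h)
      · refine le_trans (hsub i) ?_
        simp only [hg_def, if_neg h]
        exact Set.empty_subset _
    have h2 : ⋃ i ∈ Finset.range m, g i = ⋃ i, g i := by
      refine le_antisymm (Set.iUnion₂_subset fun i _ => Set.subset_iUnion _ i) ?_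
      refine Set.iUnion_subset fun i => ?_
      by_cases h : i < m
      · exact Set.subset_biUnion_of_mem (Finset.mem_range.mpr h)
      · simp only [hg_def, if_neg h]
        exact Set.empty_subset _
    rw [h1, h2, iUnion_disjointed]
  refine ⟨m, disjointed g, max C 0, fun i => MeasurableSet.disjointed hg_meas i,
    disjoint_disjointed g, le_max_right _ _, ?_, ?_, ?_⟩
  · intro i x hx y hy
    have hx' := hg_ball i (hsub i hx)
    have hy' := hg_ball i (hsub i hy)
    rw [Metric.mem_ball] at hx' hy'
    calc dist x y ≤ dist x (f i) + dist (f i) y := dist_triangle _ _ _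
      _ ≤ ε / 2 + ε / 2 := add_le_add hx'.le (by rw [dist_comm]; exact hy'.le)
      _ = ε := add_halves ε
  · intro x hx y hy
    rw [hUU] at hx hy
    exact le_trans (hC hx hy) (le_max_left _ _)
  · rw [hUU]
    refine le_trans subset_closure (le_trans hcover ?_)
    refine Set.iUnion₂_subset fun x hx => ?_
    have hxl : x ∈ l := by
      rw [hl_def, Finset.mem_toList, Set.Finite.mem_toFinset]
      exact hx
    obtain ⟨i, hi, hix⟩ := List.mem_iff_getElem.mp hxl
    have hfi : f i = x := by
      simp only [hf_def]
      rw [List.getD_eq_getElem l default hi]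
      exact hix
    refine le_trans ?_ (Set.subset_biUnion_of_mem (Finset.mem_range.mpr hi))
    simp only [hg_def, if_pos hi, hfi]
    exact le_of_eq (if_pos hi).symm


lemma stag_L1 {d : ℕ} {A : Set (EuclideanSpace ℝ (Fin d))}
    (hA : Bornology.IsBounded A)
    (μ : Measure (EuclideanSpace ℝ (Fin d))) [IsProbabilityMeasure μ] (hμA : μ Aᶜ = 0)
    (Υ : ℕ → Measure (EuclideanSpace ℝ (Fin d) × EuclideanSpace ℝ (Fin d)))
    (hcoup : ∀ n, (Υ n).map Prod.fst = μ ∧ (Υ n).map Prod.snd = μ)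
    (hstag : Tendsto (fun n => ∫ q, dist q.1 q.2 ∂(Υ n)) atTop (nhds 0))
    (h : EuclideanSpace ℝ (Fin d) → ℝ) (hmeas : Measurable h) (hbd : ∀ u, |h u| ≤ 1) :
    Tendsto (fun n => ∫ q, |h q.1 - h q.2| ∂(Υ n)) atTop (nhds 0) := by
  have hprob : ∀ n, IsProbabilityMeasure (Υ n) := by
    intro n
    constructor
    have h1 : (Υ n).map Prod.fst Set.univ = μ Set.univ := by rw [(hcoup n).1]
    rw [Measure.map_apply measurable_fst MeasurableSet.univ, Set.preimage_univ] at h1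
    rw [h1, measure_univ]
  have hae : ∀ n, ∀ᵐ q ∂(Υ n), q.1 ∈ A ∧ q.2 ∈ A := by
    intro n
    have h1 : Υ n (Prod.fst ⁻¹' Aᶜ) = 0 :=
      Measure.QuasiMeasurePreserving.preimage_null
        ⟨measurable_fst, by rw [(hcoup n).1]⟩ hμA
    have h2 : Υ n (Prod.snd ⁻¹' Aᶜ) = 0 :=
      Measure.QuasiMeasurePreserving.preimage_null
        ⟨measurable_snd, by rw [(hcoup n).2]⟩ hμA
    have e1 : ∀ᵐ q ∂(Υ n), q.1 ∈ A := by rw [ae_iff]; exact h1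
    have e2 : ∀ᵐ q ∂(Υ n), q.2 ∈ A := by rw [ae_iff]; exact h2
    exact e1.and e2
  obtain ⟨C, hC⟩ := Metric.isBounded_iff.mp hA
  have hdint : ∀ n, Integrable (fun q => dist q.1 q.2) (Υ n) := by
    intro n
    haveI := hprob n
    refine Integrable.mono' (integrable_const (max C 0))
      (continuous_fst.dist continuous_snd).aestronglyMeasurable ?_
    refine (hae n).mono fun q hq => ?_
    rw [Real.norm_eq_abs, abs_of_nonneg dist_nonneg]
    exact le_trans (hC hq.1 hq.2) (le_max_left _ _)
  have hstag_nonneg : ∀ n, 0 ≤ ∫ q, dist q.1 q.2 ∂(Υ n) := fun n =>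
    integral_nonneg fun q => dist_nonneg
  -- main estimate
  rw [Metric.tendsto_atTop]
  intro ε hε
  set ε' : ℝ := ε / 5 with hε'_def
  have hε' : 0 < ε' := by positivity
  -- approximate h in L¹(μ) by a compactly supported continuous function
  have hint : Integrable h μ := by
    refine Integrable.mono' (integrable_const 1) hmeas.aestronglyMeasurable
      (Eventually.of_forall fun x => ?_)
    rw [Real.norm_eq_abs]; exact hbd x
  obtain ⟨g, hgsupp, hgL1, hgcont, hgint⟩ := hint.exists_hasCompactSupport_integral_sub_le hε'
  obtain ⟨M, hM⟩ := hgsupp.exists_bound_of_continuous hgcont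
  set M' : ℝ := max M 1 with hM'_def
  have hM'pos : (0:ℝ) < M' := lt_of_lt_of_le one_pos (le_max_right _ _)
  have hgbd : ∀ x, |g x| ≤ M' := fun x => le_trans ((Real.norm_eq_abs _).symm ▸ hM x)
    (le_max_left _ _)
  have hgu := hgsupp.uniformContinuous_of_continuous hgcont
  rw [Metric.uniformContinuous_iff] at hgu
  obtain ⟨δ, hδ, hδ'⟩ := hgu ε' hε'
  -- choose N from stagnation
  have hpos : 0 < ε' * δ / (2 * M') := by positivity
  obtain ⟨N, hN⟩ := Metric.tendsto_atTop.mp hstag (ε' * δ / (2 * M')) hpos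
  refine ⟨N, fun n hn => ?_⟩
  haveI := hprob n
  have hdist_small : ∫ q, dist q.1 q.2 ∂(Υ n) < ε' * δ / (2 * M') := by
    have := hN n hn
    rwa [Real.dist_eq, sub_zero, abs_of_nonneg (hstag_nonneg n)] at this
  -- integrands
  set f1 : EuclideanSpace ℝ (Fin d) × EuclideanSpace ℝ (Fin d) → ℝ :=
    fun q => |h q.1 - g q.1| with hf1_def
  set f2 : EuclideanSpace ℝ (Fin d) × EuclideanSpace ℝ (Fin d) → ℝ :=
    fun q => |g q.1 - g q.2| with hf2_def
  set f3 : EuclideanSpace ℝ (Fin d) × EuclideanSpace ℝ (Fin d) → ℝ :=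
    fun q => |g q.2 - h q.2| with hf3_def
  have hf1m : Measurable f1 := ((hmeas.comp measurable_fst).sub
    (hgcont.measurable.comp measurable_fst)).abs
  have hf2m : Measurable f2 := ((hgcont.measurable.comp measurable_fst).sub
    (hgcont.measurable.comp measurable_snd)).abs
  have hf3m : Measurable f3 := ((hgcont.measurable.comp measurable_snd).sub
    (hmeas.comp measurable_snd)).abs
  have hbd1 : ∀ q, ‖f1 q‖ ≤ 1 + M' := by
    intro q
    rw [Real.norm_eq_abs, hf1_def, abs_abs]
    exact le_trans (abs_sub _ _) (add_le_add (hbd _) (hgbd _))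
  have hbd2 : ∀ q, ‖f2 q‖ ≤ M' + M' := by
    intro q
    rw [Real.norm_eq_abs, hf2_def, abs_abs]
    exact le_trans (abs_sub _ _) (add_le_add (hgbd _) (hgbd _))
  have hbd3 : ∀ q, ‖f3 q‖ ≤ M' + 1 := by
    intro q
    rw [Real.norm_eq_abs, hf3_def, abs_abs]
    exact le_trans (abs_sub _ _) (add_le_add (hgbd _) (hbd _))
  have hf1i : Integrable f1 (Υ n) := Integrable.mono' (integrable_const (1 + M'))
    hf1m.aestronglyMeasurable (Eventually.of_forall hbd1)
  have hf2i : Integrable f2 (Υ n) := Integrable.mono' (integrable_const (M' + M'))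
    hf2m.aestronglyMeasurable (Eventually.of_forall hbd2)
  have hf3i : Integrable f3 (Υ n) := Integrable.mono' (integrable_const (M' + 1))
    hf3m.aestronglyMeasurable (Eventually.of_forall hbd3)
  have hIi : Integrable (fun q => |h q.1 - h q.2|) (Υ n) := by
    refine Integrable.mono' (integrable_const 2)
      (((hmeas.comp measurable_fst).sub (hmeas.comp measurable_snd)).abs).aestronglyMeasurable
      (Eventually.of_forall fun q => ?_)
    rw [Real.norm_eq_abs, abs_abs]
    calc |h q.1 - h q.2| ≤ |h q.1| + |h q.2| := abs_sub _ _
      _ ≤ 1 + 1 := add_le_add (hbd _) (hbd _)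
      _ = 2 := by norm_num
  -- key marginal identities
  have key1 : ∫ q, f1 q ∂(Υ n) ≤ ε' := by
    have hsm : AEStronglyMeasurable (fun x => |h x - g x|) ((Υ n).map Prod.fst) :=
      ((hmeas.sub hgcont.measurable).abs).aestronglyMeasurable
    have : ∫ q, f1 q ∂(Υ n) = ∫ x, |h x - g x| ∂((Υ n).map Prod.fst) :=
      (integral_map measurable_fst.aemeasurable hsm).symm
    rw [this, (hcoup n).1]
    simpa [Real.norm_eq_abs] using hgL1
  have key3 : ∫ q, f3 q ∂(Υ n) ≤ ε' := by
    have hsm : AEStronglyMeasurable (fun x => |g x - h x|) ((Υ n).map Prod.snd) :=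
      ((hgcont.measurable.sub hmeas).abs).aestronglyMeasurable
    have : ∫ q, f3 q ∂(Υ n) = ∫ x, |g x - h x| ∂((Υ n).map Prod.snd) :=
      (integral_map measurable_snd.aemeasurable hsm).symm
    rw [this, (hcoup n).2]
    have : ∀ x, |g x - h x| = |h x - g x| := fun x => abs_sub_comm _ _
    rw [show (fun x => |g x - h x|) = fun x => |h x - g x| from funext this]
    simpa [Real.norm_eq_abs] using hgL1
  -- middle estimate
  set E : Set (EuclideanSpace ℝ (Fin d) × EuclideanSpace ℝ (Fin d)) :=
    {q | δ ≤ dist q.1 q.2} with hE_def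
  have hE : MeasurableSet E :=
    measurableSet_le measurable_const (measurable_fst.dist measurable_snd)
  have hmar : (Υ n E).toReal ≤ (∫ q, dist q.1 q.2 ∂(Υ n)) / δ := by
    have h1 : ENNReal.ofReal δ * Υ n E ≤ ∫⁻ q, ENNReal.ofReal (dist q.1 q.2) ∂(Υ n) := by
      have := mul_meas_ge_le_lintegral
        (μ := Υ n) ((measurable_fst.dist measurable_snd).ennreal_ofReal) (ENNReal.ofReal δ)
      have hset : {q : EuclideanSpace ℝ (Fin d) × EuclideanSpace ℝ (Fin d) |
          ENNReal.ofReal δ ≤ ENNReal.ofReal (dist q.1 q.2)} = E := by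
        ext q
        simp only [Set.mem_setOf_eq, hE_def]
        exact ENNReal.ofReal_le_ofReal_iff dist_nonneg
      rwa [hset] at this
    have h2 : ∫⁻ q, ENNReal.ofReal (dist q.1 q.2) ∂(Υ n)
        = ENNReal.ofReal (∫ q, dist q.1 q.2 ∂(Υ n)) :=
      (ofReal_integral_eq_lintegral_ofReal (hdint n)
        (Eventually.of_forall fun q => dist_nonneg)).symm
    have h3 : Υ n E ≤ ENNReal.ofReal (∫ q, dist q.1 q.2 ∂(Υ n)) / ENNReal.ofReal δ := by
      rw [ENNReal.le_div_iff_mul_le (Or.inl (by simp [hδ])) (Or.inl ofReal_ne_top)]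
      rw [mul_comm]
      rw [h2] at h1
      exact h1
    have h4 := ENNReal.toReal_mono ?_ h3
    · rwa [ENNReal.toReal_div, ENNReal.toReal_ofReal (hstag_nonneg n),
        ENNReal.toReal_ofReal hδ.le] at h4
    · exact (ENNReal.div_lt_top ofReal_ne_top (by simp [hδ])).ne
  have key2 : ∫ q, f2 q ∂(Υ n) ≤ ε' + (M' + M') * ((Υ n E).toReal) := by
    rw [← integral_add_compl hE hf2i]
    have hEc : ∫ q in Eᶜ, f2 q ∂(Υ n) ≤ ε' := by
      have hle : ∀ q ∈ Eᶜ, f2 q ≤ ε' := by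
        intro q hq
        rw [hE_def] at hq
        simp only [Set.mem_compl_iff, Set.mem_setOf_eq, not_le] at hq
        have := hδ' hq
        rw [Real.dist_eq] at this
        exact this.le
      calc ∫ q in Eᶜ, f2 q ∂(Υ n) ≤ ∫ _ in Eᶜ, ε' ∂(Υ n) :=
            setIntegral_mono_on hf2i.integrableOn (integrable_const _).integrableOn
              hE.compl hle
        _ = (Υ n Eᶜ).toReal * ε' := by rw [setIntegral_const, smul_eq_mul]; rfl
        _ ≤ 1 * ε' := by
            refine mul_le_mul_of_nonneg_right ?_ hε'.le
            exact ENNReal.toReal_le_of_le_ofReal one_pos.le (by simpa using prob_le_one)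
        _ = ε' := one_mul _
    have hEb : ∫ q in E, f2 q ∂(Υ n) ≤ (M' + M') * (Υ n E).toReal := by
      calc ∫ q in E, f2 q ∂(Υ n) ≤ ∫ _ in E, (M' + M') ∂(Υ n) :=
            setIntegral_mono_on hf2i.integrableOn (integrable_const _).integrableOn
              hE (fun q _ => by
                have h2 := hbd2 q
                rwa [Real.norm_eq_abs, abs_abs] at h2)
        _ = (Υ n E).toReal * (M' + M') := by rw [setIntegral_const, smul_eq_mul]; rfl
        _ = (M' + M') * (Υ n E).toReal := mul_comm _ _
    calc ∫ q in E, f2 q ∂(Υ n) + ∫ q in Eᶜ, f2 q ∂(Υ n)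
        ≤ (M' + M') * (Υ n E).toReal + ε' := add_le_add hEb hEc
      _ = ε' + (M' + M') * (Υ n E).toReal := add_comm _ _
  -- combine
  have htri : ∀ q : EuclideanSpace ℝ (Fin d) × EuclideanSpace ℝ (Fin d),
      |h q.1 - h q.2| ≤ f1 q + f2 q + f3 q := by
    intro q
    have : h q.1 - h q.2 = (h q.1 - g q.1) + (g q.1 - g q.2) + (g q.2 - h q.2) := by ring
    rw [this]
    exact le_trans (abs_add_le _ _) (add_le_add (abs_add_le _ _) le_rfl)
  have hItot : ∫ q, |h q.1 - h q.2| ∂(Υ n) ≤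
      ∫ q, f1 q ∂(Υ n) + ∫ q, f2 q ∂(Υ n) + ∫ q, f3 q ∂(Υ n) := by
    calc ∫ q, |h q.1 - h q.2| ∂(Υ n) ≤ ∫ q, (f1 q + f2 q + f3 q) ∂(Υ n) :=
          integral_mono hIi ((hf1i.add hf2i).add hf3i) htri
      _ = ∫ q, f1 q ∂(Υ n) + ∫ q, f2 q ∂(Υ n) + ∫ q, f3 q ∂(Υ n) := by
          have h12 : Integrable (fun q => f1 q + f2 q) (Υ n) := hf1i.add hf2i
          have e2 : ∫ q, (f1 q + f2 q) + f3 q ∂(Υ n)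
              = (∫ q, f1 q + f2 q ∂(Υ n)) + ∫ q, f3 q ∂(Υ n) := integral_add h12 hf3i
          rw [e2, integral_add hf1i hf2i]
  have hmid : (M' + M') * (Υ n E).toReal ≤ ε' := by
    calc (M' + M') * (Υ n E).toReal ≤ (M' + M') * ((∫ q, dist q.1 q.2 ∂(Υ n)) / δ) := by
          refine mul_le_mul_of_nonneg_left hmar (by positivity)
      _ ≤ (M' + M') * ((ε' * δ / (2 * M')) / δ) := by
          refine mul_le_mul_of_nonneg_left ?_ (by positivity)
          exact (div_le_div_iff_of_pos_right hδ).mpr hdist_small.le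
      _ = ε' := by
          field_simp
          ring
  have hfinal : ∫ q, |h q.1 - h q.2| ∂(Υ n) ≤ 4 * ε' := by
    calc ∫ q, |h q.1 - h q.2| ∂(Υ n)
        ≤ ∫ q, f1 q ∂(Υ n) + ∫ q, f2 q ∂(Υ n) + ∫ q, f3 q ∂(Υ n) := hItot
      _ ≤ ε' + (ε' + (M' + M') * (Υ n E).toReal) + ε' :=
          add_le_add (add_le_add key1 key2) key3
      _ ≤ ε' + (ε' + ε') + ε' := add_le_add (add_le_add le_rfl (add_le_add le_rfl hmid)) le_rfl
      _ = 4 * ε' := by ring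
  rw [Real.dist_eq, sub_zero, abs_of_nonneg (integral_nonneg fun q => abs_nonneg _)]
  have : (4:ℝ) * ε' < ε := by
    rw [hε'_def]; linarith
  exact lt_of_le_of_lt hfinal this


/-- stagnating sequences of self-couplings of `μ` asymptotically preserve
the conditional distributions `u ↦ μ_u` in the `W₁` sense. -/
theorem stmt13 {d d' : ℕ}
    (A : Set (EuclideanSpace ℝ (Fin d))) (B : Set (EuclideanSpace ℝ (Fin d')))
    (hA : Bornology.IsBounded A) (hB : Bornology.IsBounded B)
    (μ : Measure (EuclideanSpace ℝ (Fin d))) [IsProbabilityMeasure μ] (hμA : μ Aᶜ = 0)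
    (K : Kernel (EuclideanSpace ℝ (Fin d)) (EuclideanSpace ℝ (Fin d')))
    [IsMarkovKernel K] (hKB : ∀ u, (K u) Bᶜ = 0)
    (Υ : ℕ → Measure (EuclideanSpace ℝ (Fin d) × EuclideanSpace ℝ (Fin d)))
    (hcoup : ∀ n, (Υ n).map Prod.fst = μ ∧ (Υ n).map Prod.snd = μ)
    (hstag : Filter.Tendsto (fun n => ∫ q, dist q.1 q.2 ∂(Υ n)) Filter.atTop (nhds 0)) :
    Filter.Tendsto (fun n => ∫ q, W1 (K q.1) (K q.2) ∂(Υ n)) Filter.atTop (nhds 0) := by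
  have hprob : ∀ n, IsProbabilityMeasure (Υ n) := by
    intro n
    constructor
    have h1 : (Υ n).map Prod.fst Set.univ = μ Set.univ := by rw [(hcoup n).1]
    rw [Measure.map_apply measurable_fst MeasurableSet.univ, Set.preimage_univ] at h1
    rw [h1, measure_univ]
  rw [NormedAddCommGroup.tendsto_nhds_zero]
  intro ε hε
  have hε2 : 0 < ε / 2 := by positivity
  obtain ⟨m, Bs, D, hBmeas, hdisj, hD, hsmall, hbig, hcover⟩ := exists_partition B hB hε2
  set hf : ℕ → EuclideanSpace ℝ (Fin d) → ℝ := fun i u => ((K u) (Bs i)).toReal with hf_def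
  have hmeasK : ∀ i, Measurable (hf i) := fun i => (K.measurable_coe (hBmeas i)).ennreal_toReal
  have hbdK : ∀ i u, |hf i u| ≤ 1 := by
    intro i u
    simp only [hf_def]
    rw [abs_of_nonneg ENNReal.toReal_nonneg]
    exact ENNReal.toReal_le_of_le_ofReal one_pos.le (by simpa using prob_le_one)
  have hnull : ∀ u : EuclideanSpace ℝ (Fin d), (K u) (⋃ i ∈ Finset.range m, Bs i)ᶜ = 0 :=
    fun u => measure_mono_null (Set.compl_subset_compl.mpr hcover) (hKB u)
  have hpt : ∀ q : EuclideanSpace ℝ (Fin d) × EuclideanSpace ℝ (Fin d),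
      W1 (K q.1) (K q.2) ≤ ε / 2 + D * ∑ i ∈ Finset.range m, |hf i q.1 - hf i q.2| :=
    fun q => W1_le_partition (K q.1) (K q.2) m Bs hBmeas hdisj hε2.le hD
      (fun i => hsmall i) hbig (hnull q.1) (hnull q.2)
  set gsum : EuclideanSpace ℝ (Fin d) × EuclideanSpace ℝ (Fin d) → ℝ :=
    fun q => ∑ i ∈ Finset.range m, |hf i q.1 - hf i q.2| with hg_def
  have hgm : Measurable gsum := Finset.measurable_sum _ fun i _ =>
    (((hmeasK i).comp measurable_fst).sub ((hmeasK i).comp measurable_snd)).abs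
  have helem : ∀ (i : ℕ) (q : EuclideanSpace ℝ (Fin d) × EuclideanSpace ℝ (Fin d)),
      |hf i q.1 - hf i q.2| ≤ 2 := by
    intro i q
    have h1 := hbdK i q.1
    have h2 := hbdK i q.2
    calc |hf i q.1 - hf i q.2| ≤ |hf i q.1| + |hf i q.2| := abs_sub _ _
      _ ≤ 2 := by linarith
  have hgbd : ∀ q, ‖gsum q‖ ≤ 2 * m := by
    intro q
    rw [Real.norm_eq_abs, hg_def,
      abs_of_nonneg (Finset.sum_nonneg fun i _ => abs_nonneg _)]
    calc ∑ i ∈ Finset.range m, |hf i q.1 - hf i q.2| ≤ ∑ _i ∈ Finset.range m, (2:ℝ) :=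
          Finset.sum_le_sum fun i _ => helem i q
      _ = 2 * m := by simp [mul_comm]
  have hgint : ∀ n, Integrable gsum (Υ n) := by
    intro n
    haveI := hprob n
    exact Integrable.mono' (integrable_const ((2 * m : ℝ))) hgm.aestronglyMeasurable
      (Eventually.of_forall hgbd)
  have heint : ∀ (n : ℕ) (i : ℕ),
      Integrable (fun q : EuclideanSpace ℝ (Fin d) × EuclideanSpace ℝ (Fin d) =>
        |hf i q.1 - hf i q.2|) (Υ n) := by
    intro n i
    haveI := hprob n
    refine Integrable.mono' (integrable_const 2)
      ((((hmeasK i).comp measurable_fst).sub ((hmeasK i).comp measurable_snd)).abs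
        ).aestronglyMeasurable (Eventually.of_forall fun q => ?_)
    rw [Real.norm_eq_abs, abs_abs]
    exact helem i q
  have hJeq : ∀ n, ∫ q, (ε / 2 + D * gsum q) ∂(Υ n)
      = ε / 2 + D * ∑ i ∈ Finset.range m, ∫ q, |hf i q.1 - hf i q.2| ∂(Υ n) := by
    intro n
    haveI := hprob n
    rw [integral_add (integrable_const _) ((hgint n).const_mul D), integral_const,
      probReal_univ, one_smul, integral_const_mul, hg_def,
      integral_finset_sum _ (fun i _ => heint n i)]
  have hsum0 : Tendsto (fun n => ∑ i ∈ Finset.range m,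
      ∫ q, |hf i q.1 - hf i q.2| ∂(Υ n)) atTop (nhds 0) := by
    have h0 := tendsto_finset_sum (Finset.range m)
      (fun i _ => stag_L1 hA μ hμA Υ hcoup hstag (hf i) (hmeasK i) (hbdK i))
    simpa using h0
  have hJlim : Tendsto (fun n => ε / 2 + D * ∑ i ∈ Finset.range m,
      ∫ q, |hf i q.1 - hf i q.2| ∂(Υ n)) atTop (nhds (ε / 2 + D * 0)) :=
    tendsto_const_nhds.add (hsum0.const_mul D)
  rw [mul_zero, add_zero] at hJlim
  have hev := hJlim.eventually_lt_const (show ε / 2 < ε by linarith)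
  filter_upwards [hev] with n hn
  haveI := hprob n
  rw [Real.norm_eq_abs, abs_of_nonneg (integral_nonneg fun q => W1_nonneg _ _)]
  by_cases hi : Integrable (fun q : EuclideanSpace ℝ (Fin d) × EuclideanSpace ℝ (Fin d) =>
    W1 (K q.1) (K q.2)) (Υ n)
  · have hmono := integral_mono hi
      ((integrable_const (ε / 2)).add ((hgint n).const_mul D)) hpt
    calc ∫ q, W1 (K q.1) (K q.2) ∂(Υ n) ≤ ∫ q, (ε / 2 + D * gsum q) ∂(Υ n) := hmono
      _ = ε / 2 + D * ∑ i ∈ Finset.range m, ∫ q, |hf i q.1 - hf i q.2| ∂(Υ n) := hJeq n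
      _ < ε := hn
  · rw [integral_undef hi]
    exact hε
end
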